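/- arXiv:1805.11278 — 13 statements merged into one kernel-verified Lean document; each statement's English description precedes it below -/
import Mathlib

section
/- Let d ≥ 1 be an integer and let A = A_1 × ⋯ × A_d, where A_1, …, A_d are finite sets each of size at least 2. If {B^1, B^2, …, B^m} is a partition of A into proper sub-boxes, then m ≥ 2^d. -/
open Finset

namespace ABHK

variable {β : Type*} [DecidableEq β]

/-- toggle an element in/out of a finset -/
def tog (a : β) (C : Finset β) : Finset β :=
  if a ∈ C then C.erase a else insert a C

lemma tog_tog (a : β) (C : Finset β) : tog a (tog a C) = C := by
  unfold tog
  by_cases h : a ∈ C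
  · simp [h, insert_erase]
  · simp [h, erase_insert]

lemma tog_subset {s : Finset β} {a : β} (ha : a ∈ s) {C : Finset β} (hC : C ⊆ s) :
    tog a C ⊆ s := by
  unfold tog; split
  · exact (erase_subset _ _).trans hC
  · exact insert_subset ha hC

lemma even_card_tog {a : β} {C : Finset β} (h : Odd C.card) : Even ((tog a C).card) := by
  unfold tog
  by_cases hm : a ∈ C
  · rw [if_pos hm, card_erase_of_mem hm]
    rcases h with ⟨k, hk⟩
    exact ⟨k, by omega⟩
  · rw [if_neg hm, card_insert_of_notMem hm]
    rcases h with ⟨k, hk⟩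
    exact ⟨k + 1, by omega⟩

lemma odd_card_tog {a : β} {C : Finset β} (h : Even C.card) : Odd ((tog a C).card) := by
  unfold tog
  by_cases hm : a ∈ C
  · rw [if_pos hm, card_erase_of_mem hm]
    have hpos : 0 < C.card := card_pos.2 ⟨a, hm⟩
    rcases h with ⟨k, hk⟩
    exact ⟨k - 1, by omega⟩
  · rw [if_neg hm, card_insert_of_notMem hm]
    rcases h with ⟨k, hk⟩
    exact ⟨k, by omega⟩

/-- number of odd subsets = number of even subsets, for nonempty s -/
lemma card_odd_eq_card_even {s : Finset β} (hs : s.Nonempty) :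
    (s.powerset.filter fun C => Odd C.card).card
      = (s.powerset.filter fun C => Even C.card).card := by
  obtain ⟨a, ha⟩ := hs
  refine card_bij' (fun C _ => tog a C) (fun C _ => tog a C) ?_ ?_ ?_ ?_
  · intro C hC
    rw [mem_filter, mem_powerset] at hC ⊢
    exact ⟨tog_subset ha hC.1, even_card_tog hC.2⟩
  · intro C hC
    rw [mem_filter, mem_powerset] at hC ⊢
    exact ⟨tog_subset ha hC.1, odd_card_tog hC.2⟩
  · intro C _; exact tog_tog a C
  · intro C _; exact tog_tog a C

lemma card_odd_powerset {s : Finset β} (hs : s.Nonempty) :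
    (s.powerset.filter fun C => Odd C.card).card = 2 ^ (s.card - 1) := by
  have h1 : (s.powerset.filter fun C => Odd C.card).card
      + (s.powerset.filter fun C => ¬ Odd C.card).card = 2 ^ s.card := by
    rw [card_filter_add_card_filter_not, card_powerset]
  have h2 : (s.powerset.filter fun C => ¬ Odd C.card)
      = (s.powerset.filter fun C => Even C.card) := by
    apply filter_congr; intro C _; simp [Nat.not_odd_iff_even]
  rw [h2, ← card_odd_eq_card_even hs] at h1
  have hc : 1 ≤ s.card := card_pos.2 hs
  have h3 : 2 ^ s.card = 2 * 2 ^ (s.card - 1) := by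
    rw [← pow_succ']
    congr 1
    omega
  omega

lemma card_even_powerset {s : Finset β} (hs : s.Nonempty) :
    (s.powerset.filter fun C => Even C.card).card = 2 ^ (s.card - 1) := by
  rw [← card_odd_eq_card_even hs, card_odd_powerset hs]

variable [Fintype β]

/-- key per-coordinate count: subsets `C` with `|C|` odd and `|Bs ∩ C|` odd. -/
lemma card_odd_odd (Bs : Finset β) (hne : Bs.Nonempty) (hpr : Bs ≠ univ) :
    ((univ : Finset (Finset β)).filter
      fun C => Odd C.card ∧ Odd (Bs ∩ C).card).card = 2 ^ (Fintype.card β - 2) := by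
  classical
  have hlt : Bs.card < Fintype.card β := (card_lt_iff_ne_univ Bs).2 hpr
  have hcne : (Bsᶜ : Finset β).Nonempty := by
    rw [← card_pos, card_compl]
    omega
  have key : ((univ : Finset (Finset β)).filter
      fun C => Odd C.card ∧ Odd (Bs ∩ C).card).card
      = ((Bs.powerset.filter fun D => Odd D.card) ×ˢ
         (Bsᶜ.powerset.filter fun E => Even E.card)).card := by
    refine card_bij' (fun C _ => (C ∩ Bs, C \ Bs)) (fun p _ => p.1 ∪ p.2) ?_ ?_ ?_ ?_
    · intro C hC
      rw [mem_filter] at hC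
      obtain ⟨-, hodd, hoddI⟩ := hC
      rw [mem_product]
      simp only [mem_filter, mem_powerset]
      have hcap : C ∩ Bs = Bs ∩ C := inter_comm _ _
      have hsum : (C ∩ Bs).card + (C \ Bs).card = C.card := card_inter_add_card_sdiff C Bs
      refine ⟨⟨inter_subset_right, by rwa [hcap]⟩, ?_, ?_⟩
      · intro x hx
        rw [mem_sdiff] at hx
        simpa using hx.2
      · rcases hodd with ⟨k, hk⟩
        rcases hoddI with ⟨l, hl⟩
        rw [hcap] at hsum
        exact ⟨k - l, by omega⟩
    · intro p hp
      rw [mem_product] at hp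
      simp only [mem_filter, mem_powerset] at hp
      obtain ⟨⟨h1, h2⟩, h3, h4⟩ := hp
      rw [mem_filter]
      have hdisj : Disjoint p.1 p.2 := by
        rw [disjoint_left]
        intro x hx1 hx2
        exact (mem_compl.1 (h3 hx2)) (h1 hx1)
      have hcu : (p.1 ∪ p.2).card = p.1.card + p.2.card := card_union_of_disjoint hdisj
      have hint : Bs ∩ (p.1 ∪ p.2) = p.1 := by
        ext x
        simp only [mem_inter, mem_union]
        constructor
        · rintro ⟨hxB, hx | hx⟩
          · exact hx
          · exact absurd hxB (mem_compl.1 (h3 hx))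
        · intro hx
          exact ⟨h1 hx, Or.inl hx⟩
      refine ⟨mem_univ _, ?_, ?_⟩
      · show Odd (p.1 ∪ p.2).card
        rcases h2 with ⟨k, hk⟩
        rcases h4 with ⟨l, hl⟩
        exact ⟨k + l, by omega⟩
      · show Odd (Bs ∩ (p.1 ∪ p.2)).card
        rw [hint]; exact h2
    · intro C _
      ext x
      simp only [mem_union, mem_inter, mem_sdiff]
      tauto
    · intro p hp
      rw [mem_product] at hp
      simp only [mem_filter, mem_powerset] at hp
      obtain ⟨⟨h1, -⟩, h3, -⟩ := hp
      have : ∀ x ∈ p.2, x ∉ Bs := fun x hx => mem_compl.1 (h3 hx)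
      refine Prod.ext ?_ ?_
      · ext x
        simp only [mem_inter, mem_union]
        constructor
        · rintro ⟨hx | hx, hxB⟩
          · exact hx
          · exact absurd hxB (this x hx)
        · intro hx
          exact ⟨Or.inl hx, h1 hx⟩
      · ext x
        simp only [mem_sdiff, mem_union]
        constructor
        · rintro ⟨hx | hx, hxB⟩
          · exact absurd (h1 hx) hxB
          · exact hx
        · intro hx
          exact ⟨Or.inr hx, this x hx⟩
  rw [key, card_product, card_odd_powerset hne, card_even_powerset hcne, card_compl,
    ← pow_add]
  congr 1
  have h1 : 1 ≤ Bs.card := card_pos.2 hne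
  omega

lemma card_odd_univ (h : 1 ≤ Fintype.card β) :
    ((univ : Finset (Finset β)).filter fun C => Odd C.card).card
      = 2 ^ (Fintype.card β - 1) := by
  have hs : (univ : Finset β).Nonempty := by
    rw [← card_pos]
    exact h
  have := card_odd_powerset hs
  rwa [powerset_univ, card_univ] at this

end ABHK

/-- **Alon–Bohman–Holzman–Kleitman.** If a `d`-dimensional discrete box
`A = A_1 × ⋯ × A_d` (each `A_i` finite of size at least 2) is partitioned into
`m` proper sub-boxes, then `m ≥ 2^d`. Sub-boxes are given by their side sets
`B j i ⊆ A i` (here `A i` is modelled as the full finite type `α i`),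
each nonempty and proper (`≠ univ`), and "partition" means every point of the
product lies in exactly one sub-box. -/
theorem stmt_0 (d m : ℕ) (hd : 1 ≤ d)
    (α : Fin d → Type*) [∀ i, Fintype (α i)]
    (hcard : ∀ i, 2 ≤ Fintype.card (α i))
    (B : Fin m → ∀ i, Finset (α i))
    (hne : ∀ j i, (B j i).Nonempty)
    (hproper : ∀ j i, B j i ≠ Finset.univ)
    (hpart : ∀ x : ∀ i, α i, ∃! j : Fin m, ∀ i, x i ∈ B j i) :
    2 ^ d ≤ m := by
  classical
  -- the key parity fact: for every tuple of odd-size sets `C i`, there is a box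
  -- meeting it oddly in every coordinate
  have key : ∀ C : ∀ i, Finset (α i), (∀ i, Odd (C i).card) →
      ∃ j : Fin m, ∀ i, Odd ((B j i ∩ C i).card) := by
    intro C hC
    -- the pieces partition the box `∏ C i`
    have hunion : Finset.univ.biUnion
        (fun j : Fin m => Fintype.piFinset (fun i => B j i ∩ C i))
        = Fintype.piFinset C := by
      ext x
      simp only [Finset.mem_biUnion, Fintype.mem_piFinset, Finset.mem_univ, true_and,
        Finset.mem_inter]
      constructor
      · rintro ⟨j, hj⟩
        exact fun i => (hj i).2
      · intro hx
        obtain ⟨j, hj, -⟩ := hpart x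
        exact ⟨j, fun i => ⟨hj i, hx i⟩⟩
    have hdisj : ∀ j ∈ (Finset.univ : Finset (Fin m)), ∀ j' ∈ Finset.univ, j ≠ j' →
        Disjoint (Fintype.piFinset (fun i => B j i ∩ C i))
          (Fintype.piFinset (fun i => B j' i ∩ C i)) := by
      intro j _ j' _ hjj'
      rw [Finset.disjoint_left]
      intro x hx hx'
      rw [Fintype.mem_piFinset] at hx hx'
      obtain ⟨j₀, -, huniq⟩ := hpart x
      have e1 : j = j₀ := huniq j (fun i => (Finset.mem_inter.1 (hx i)).1)
      have e2 : j' = j₀ := huniq j' (fun i => (Finset.mem_inter.1 (hx' i)).1)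
      exact hjj' (e1.trans e2.symm)
    have hsum : ∑ j : Fin m, ∏ i, (B j i ∩ C i).card = ∏ i, (C i).card := by
      calc ∑ j : Fin m, ∏ i, (B j i ∩ C i).card
          = ∑ j : Fin m, (Fintype.piFinset (fun i => B j i ∩ C i)).card := by
            refine Finset.sum_congr rfl fun j _ => ?_
            rw [Fintype.card_piFinset]
        _ = (Finset.univ.biUnion
              (fun j : Fin m => Fintype.piFinset (fun i => B j i ∩ C i))).card := by
            rw [Finset.card_biUnion hdisj]
        _ = (Fintype.piFinset C).card := by rw [hunion]
        _ = ∏ i, (C i).card := Fintype.card_piFinset C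
    have hodd : Odd (∑ j : Fin m, ∏ i, (B j i ∩ C i).card) := by
      rw [hsum]
      exact Finset.prod_induction _ Odd (fun a b ha hb => ha.mul hb) odd_one (fun i _ => hC i)
    by_contra hcon
    push_neg at hcon
    -- every summand would be even
    have : Even (∑ j : Fin m, ∏ i, (B j i ∩ C i).card) := by
      refine Finset.even_sum _ fun j _ => ?_
      obtain ⟨i, hi⟩ := hcon j
      rw [Nat.not_odd_iff_even] at hi
      rcases hi with ⟨k, hk⟩
      have hdvd : (B j i ∩ C i).card ∣ ∏ i', (B j i' ∩ C i').card :=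
        Finset.dvd_prod_of_mem _ (Finset.mem_univ i)
      obtain ⟨t, ht⟩ := hdvd
      exact ⟨k * t, by rw [ht, hk]; ring⟩
    rw [Nat.even_iff, Nat.odd_iff] at *
    omega
  -- the finset of odd tuples
  set T : Finset (∀ i, Finset (α i)) :=
    Fintype.piFinset (fun i => (Finset.univ : Finset (Finset (α i))).filter
      fun C => Odd C.card) with hT
  have hTcard : T.card = ∏ i, 2 ^ (Fintype.card (α i) - 1) := by
    rw [hT, Fintype.card_piFinset]
    exact Finset.prod_congr rfl fun i _ =>
      ABHK.card_odd_univ (le_trans one_le_two (hcard i))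
  -- choose, for each odd tuple, a box meeting it oddly everywhere
  have hm0 : Nonempty (Fin m) := by
    have hx : ∀ i, Nonempty (α i) := fun i =>
      Fintype.card_pos_iff.1 (by have := hcard i; omega)
    obtain ⟨j, -, -⟩ := hpart (fun i => (hx i).some)
    exact ⟨j⟩
  let φ : (∀ i, Finset (α i)) → Fin m := fun C =>
    if h : ∃ j : Fin m, ∀ i, Odd ((B j i ∩ C i).card) then h.choose
    else Classical.arbitrary (Fin m)
  have hφ : ∀ C ∈ T, ∀ i, Odd ((B (φ C) i ∩ C i).card) := by
    intro C hC
    have hCodd : ∀ i, Odd (C i).card := by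
      intro i
      have := (Fintype.mem_piFinset.1 hC) i
      exact (Finset.mem_filter.1 this).2
    have h := key C hCodd
    simpa only [φ, dif_pos h] using h.choose_spec
  -- fiberwise counting
  have hfib : ∀ j : Fin m, (T.filter fun C => φ C = j).card
      ≤ ∏ i, 2 ^ (Fintype.card (α i) - 2) := by
    intro j
    have hsub : (T.filter fun C => φ C = j) ⊆
        Fintype.piFinset (fun i => (Finset.univ : Finset (Finset (α i))).filter
          fun Ci => Odd Ci.card ∧ Odd ((B j i ∩ Ci).card)) := by
      intro C hC
      rw [Finset.mem_filter] at hC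
      obtain ⟨hCT, hCj⟩ := hC
      rw [Fintype.mem_piFinset]
      intro i
      rw [Finset.mem_filter]
      refine ⟨Finset.mem_univ _, ?_, ?_⟩
      · exact (Finset.mem_filter.1 ((Fintype.mem_piFinset.1 hCT) i)).2
      · have := hφ C hCT i
        rwa [hCj] at this
    calc (T.filter fun C => φ C = j).card
        ≤ (Fintype.piFinset (fun i => (Finset.univ : Finset (Finset (α i))).filter
            fun Ci => Odd Ci.card ∧ Odd ((B j i ∩ Ci).card))).card :=
          Finset.card_le_card hsub
      _ = ∏ i, ((Finset.univ : Finset (Finset (α i))).filter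
            fun Ci => Odd Ci.card ∧ Odd ((B j i ∩ Ci).card)).card :=
          Fintype.card_piFinset _
      _ = ∏ i, 2 ^ (Fintype.card (α i) - 2) :=
          Finset.prod_congr rfl fun i _ =>
            ABHK.card_odd_odd (B j i) (hne j i) (hproper j i)
  -- put it together
  have hcount : T.card ≤ m * ∏ i, 2 ^ (Fintype.card (α i) - 2) := by
    have := Finset.card_eq_sum_card_fiberwise
      (f := φ) (s := T) (t := Finset.univ) (fun C _ => Finset.mem_univ _)
    rw [this]
    calc ∑ j : Fin m, (T.filter fun C => φ C = j).card
        ≤ ∑ _j : Fin m, ∏ i, 2 ^ (Fintype.card (α i) - 2) :=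
          Finset.sum_le_sum fun j _ => hfib j
      _ = m * ∏ i, 2 ^ (Fintype.card (α i) - 2) := by
          rw [Finset.sum_const, Finset.card_univ, Fintype.card_fin, smul_eq_mul]
  have hfactor : T.card = 2 ^ d * ∏ i, 2 ^ (Fintype.card (α i) - 2) := by
    rw [hTcard]
    calc ∏ i, 2 ^ (Fintype.card (α i) - 1)
          = ∏ i : Fin d, (2 * 2 ^ (Fintype.card (α i) - 2)) := by
            refine Finset.prod_congr rfl fun i _ => ?_
            have h2 : 2 ≤ Fintype.card (α i) := hcard i
            rw [← pow_succ']
            congr 1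
            omega
        _ = (∏ _i : Fin d, 2) * ∏ i, 2 ^ (Fintype.card (α i) - 2) :=
            Finset.prod_mul_distrib
        _ = 2 ^ d * ∏ i, 2 ^ (Fintype.card (α i) - 2) := by
            rw [Finset.prod_const, Finset.card_univ, Fintype.card_fin]
  have hpos : 0 < ∏ i, 2 ^ (Fintype.card (α i) - 2) :=
    Finset.prod_pos fun i _ => pow_pos two_pos _
  rw [hfactor] at hcount
  exact Nat.le_of_mul_le_mul_right hcount hpos
end

section
/- There exists a partition of [5]^3 into exactly 25 odd proper boxes. -/
set_option maxRecDepth 10000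

/-- Explicit list of 25 odd proper boxes partitioning `[5]^3`. -/
def myBoxes : Fin 25 → Fin 3 → Finset (Fin 5) :=
  ![![{0}, {3}, {0, 1, 2}],
    ![{1, 2, 3}, {3}, {0, 1, 2}],
    ![{2}, {0, 1, 2}, {0, 1, 2}],
    ![{1, 3, 4}, {0}, {0, 2, 3}],
    ![{1, 3, 4}, {1}, {0, 2, 3}],
    ![{0}, {0, 1, 4}, {0, 2, 4}],
    ![{0, 1, 3}, {2}, {0, 2, 4}],
    ![{2, 3, 4}, {4}, {1, 2, 3}],
    ![{1}, {4}, {1, 2, 4}],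
    ![{4}, {3}, {1, 2, 4}],
    ![{4}, {2}, {2, 3, 4}],
    ![{1, 2, 3}, {4}, {0}],
    ![{4}, {2, 3, 4}, {0}],
    ![{0}, {0}, {1}],
    ![{0}, {1, 2, 4}, {1}],
    ![{1, 3, 4}, {0, 1, 2}, {1}],
    ![{0}, {0, 1, 4}, {3}],
    ![{0, 2, 3}, {2}, {3}],
    ![{0, 3, 4}, {3}, {3}],
    ![{1}, {2, 3, 4}, {3}],
    ![{2}, {0, 1, 3}, {3}],
    ![{0, 2, 3}, {3}, {4}],
    ![{1}, {0, 1, 3}, {4}],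
    ![{2, 3, 4}, {0, 1, 4}, {4}],
    ![{2}, {2}, {4}]]

/-- There is a partition of `[5]^3` into exactly `25` odd proper boxes.
Points of `[5]^3` are modelled as functions `Fin 3 → Fin 5`; a box is given
by its side sets `B j i ⊆ Fin 5`, each nonempty, proper (`≠ univ`) and of odd
size, and "partition" means every point lies in exactly one box. -/
theorem stmt_2 :
    ∃ B : Fin 25 → Fin 3 → Finset (Fin 5),
      (∀ j i, (B j i).Nonempty) ∧
      (∀ j i, B j i ≠ Finset.univ) ∧
      (∀ j i, Odd (B j i).card) ∧
      (∀ x : Fin 3 → Fin 5, ∃! j, ∀ i, x i ∈ B j i) := by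
  refine ⟨myBoxes, ?_, ?_, ?_, ?_⟩
  · decide
  · decide
  · decide
  · intro x
    have h : ∀ y : Fin 3 → Fin 5, ∃ j, (∀ i, y i ∈ myBoxes j i) ∧
        ∀ k, (∀ i, y i ∈ myBoxes k i) → k = j := by decide
    obtain ⟨j, hj, hu⟩ := h x
    exact ⟨j, hj, hu⟩
end

section
/- Let n ≥ 3 be an odd integer and d ≥ 1 an arbitrary integer. If {B^1, B^2, …, B^m} is a partition of [n]^d into proper odd bricks, then m ≥ 3^d. -/
open Finset

/-- Alternating sum over a natural-number interval of odd length. -/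
lemma altsum_nat (a b : ℕ) (h : Odd (b + 1 - a)) :
    ∑ k ∈ Finset.Icc a b, (-1 : ℤ)^k = (-1)^a := by
  rw [← Finset.Ico_add_one_right_eq_Icc, Finset.sum_Ico_eq_sum_range]
  simp_rw [pow_add]
  rw [← Finset.mul_sum, neg_one_geom_sum, if_neg (Nat.not_even_iff_odd.mpr h), mul_one]

/-- Alternating sum over a `Fin` interval of odd cardinality. -/
lemma altsum_fin {n : ℕ} (a b : Fin n) (h : Odd (Finset.Icc a b).card) :
    ∑ k ∈ Finset.Icc a b, (-1 : ℤ)^(k : ℕ) = (-1)^(a : ℕ) := by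
  have hmap : ∑ k ∈ Finset.Icc (a : ℕ) (b : ℕ), (-1 : ℤ)^k
      = ∑ k ∈ Finset.Icc a b, (-1 : ℤ)^(k : ℕ) := by
    rw [← Fin.map_valEmbedding_Icc, Finset.sum_map]
    rfl
  rw [← hmap]
  exact altsum_nat _ _ (by rwa [Fin.card_Icc] at h)

/-- Rewriting a filtered sum over a subtype. -/
lemma sum_subtype_ite {ι : Type} [Fintype ι] (P Q : ι → Prop)
    [DecidablePred P] [DecidablePred Q] (f : ι → ℤ) :
    ∑ j : {j // P j}, (if Q j.1 then f j.1 else 0)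
      = ∑ j : ι, (if P j ∧ Q j then f j else 0) := by
  classical
  rw [← Finset.sum_subtype (Finset.univ.filter P) (fun x => by simp) 
        (fun j => if Q j then f j else 0)]
  rw [Finset.sum_filter]
  apply Finset.sum_congr rfl
  intro j _
  by_cases hP : P j <;> by_cases hQ : Q j <;> simp [hP, hQ]

/-- Key lemma: a "signed partition" of `[n]^d` (n odd) into proper odd bricks,
with integer weights summing to 1 over every point, has at least `3^d` bricks. -/
lemma key_lemma (n : ℕ) (hodd : Odd n) (d : ℕ) :
    ∀ (ι : Type) (_ : Fintype ι) (B : ι → Fin d → Finset (Fin n)) (ε : ι → ℤ),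
    (∀ j i, B j i ≠ Finset.univ) →
    (∀ j i, Odd (B j i).card) →
    (∀ j i, ∃ a b : Fin n, B j i = Finset.Icc a b) →
    (∀ x : Fin d → Fin n, ∑ j, (if ∀ i, x i ∈ B j i then ε j else 0) = 1) →
    3 ^ d ≤ Fintype.card ι := by
  classical
  have hn0 : n ≠ 0 := by rintro rfl; simpa using hodd
  obtain ⟨t, rfl⟩ : ∃ t, n = t + 1 := ⟨n - 1, by omega⟩
  induction d with
  | zero =>
    intro ι inst B ε hp ho hb hcov
    rcases isEmpty_or_nonempty ι with hE | hN
    · exfalso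
      have := hcov (fun i => i.elim0)
      rw [Finset.univ_eq_empty, Finset.sum_empty] at this
      exact absurd this (by norm_num)
    · rw [pow_zero]
      exact Fintype.card_pos
  | succ d ih =>
    intro ι inst B ε hp ho hb hcov
    -- alternating weight of the first interval
    set s : ι → ℤ := fun j => ∑ k ∈ B j 0, (-1 : ℤ)^(k : ℕ) with hs_def
    have hs_ab : ∀ j, ∃ a b : Fin (t+1), B j 0 = Finset.Icc a b := fun j => hb j 0
    -- s j = (-1)^a
    have hs_pow : ∀ j (a b : Fin (t+1)), B j 0 = Finset.Icc a b → s j = (-1)^(a:ℕ) := by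
      intro j a b hab
      rw [hs_def]
      simp only
      rw [hab]
      exact altsum_fin a b (by rw [← hab]; exact ho j 0)
    have hsL : ∀ j, (0 : Fin (t+1)) ∈ B j 0 → s j = 1 := by
      intro j h0
      obtain ⟨a, b, hab⟩ := hs_ab j
      rw [hab, Finset.mem_Icc] at h0
      have ha : a = 0 := Fin.le_zero_iff.mp h0.1
      rw [hs_pow j a b hab, ha]
      simp
    have hsR : ∀ j, Fin.last t ∈ B j 0 → s j = 1 := by
      intro j h0
      obtain ⟨a, b, hab⟩ := hs_ab j
      rw [hab, Finset.mem_Icc] at h0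
      have hbb : b = Fin.last t := Fin.last_le_iff.mp h0.2
      have hcard := ho j 0
      rw [hab, Fin.card_Icc, hbb] at hcard
      simp only [Fin.val_last] at hcard
      -- card = t + 1 - a, odd; t+1 odd ⇒ a even
      have haval : (a : ℕ) ≤ t := by
        have := a.isLt; omega
      have : Even (a : ℕ) := by
        rcases Nat.even_or_odd (a : ℕ) with he | hodd'
        · exact he
        · exfalso
          have h1 : Odd (t + 1) := hodd
          rw [Nat.odd_iff] at hcard h1 hodd'
          omega
      rw [hs_pow j a b hab, Even.neg_one_pow this]
    have hdisj : ∀ j, ¬((0 : Fin (t+1)) ∈ B j 0 ∧ Fin.last t ∈ B j 0) := by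
      rintro j ⟨h0, h1⟩
      obtain ⟨a, b, hab⟩ := hs_ab j
      rw [hab, Finset.mem_Icc] at h0 h1
      have ha : a = 0 := Fin.le_zero_iff.mp h0.1
      have hbb : b = Fin.last t := Fin.last_le_iff.mp h1.2
      apply hp j 0
      rw [hab, ha, hbb]
      ext x
      simp [Fin.le_last]
    -- total alternating sum over a full column is 1
    have htot : ∑ k : Fin (t+1), (-1 : ℤ)^(k : ℕ) = 1 := by
      rw [Fin.sum_univ_eq_sum_range (fun k => (-1 : ℤ)^k), neg_one_geom_sum,
        if_neg (Nat.not_even_iff_odd.mpr hodd)]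
    -- membership decomposition
    have hc : ∀ (j : ι) (k : Fin (t+1)) (y : Fin d → Fin (t+1)),
        (∀ i : Fin (d+1), (Fin.cons k y : Fin (d+1) → Fin (t+1)) i ∈ B j i)
          ↔ (k ∈ B j 0 ∧ ∀ i : Fin d, y i ∈ B j i.succ) := by
      intro j k y
      rw [Fin.forall_fin_succ]
      simp
    -- the three classes
    set pL : ι → Prop := fun j => (0 : Fin (t+1)) ∈ B j 0 with hpL_def
    set pR : ι → Prop := fun j => Fin.last t ∈ B j 0 with hpR_def
    set pM : ι → Prop := fun j => ¬ pL j ∧ ¬ pR j with hpM_def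
    set tc : ι → (Fin d → Fin (t+1)) → Prop :=
      fun j y => ∀ i : Fin d, y i ∈ B j i.succ with htc_def
    -- L equation
    have hL : ∀ y : Fin d → Fin (t+1),
        ∑ j, (if pL j ∧ tc j y then ε j else 0) = 1 := by
      intro y
      have := hcov (Fin.cons 0 y)
      rw [← this]
      apply Finset.sum_congr rfl
      intro j _
      exact if_congr ((hc j 0 y).symm) rfl rfl
    -- R equation
    have hR : ∀ y : Fin d → Fin (t+1),
        ∑ j, (if pR j ∧ tc j y then ε j else 0) = 1 := by
      intro y
      have := hcov (Fin.cons (Fin.last t) y)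
      rw [← this]
      apply Finset.sum_congr rfl
      intro j _
      exact if_congr ((hc j (Fin.last t) y).symm) rfl rfl
    -- full weighted equation
    have hA : ∀ y : Fin d → Fin (t+1),
        ∑ j, (if tc j y then ε j * s j else 0) = 1 := by
      intro y
      have inner : ∀ j, (if tc j y then ε j * s j else 0)
          = ∑ k : Fin (t+1), (if k ∈ B j 0 ∧ tc j y
              then ε j * (-1 : ℤ)^(k : ℕ) else 0) := by
        intro j
        by_cases htc : tc j y
        · rw [if_pos htc]
          have hk : ∀ k : Fin (t+1), (if k ∈ B j 0 ∧ tc j y then ε j * (-1 : ℤ)^(k : ℕ) else 0)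
              = (if k ∈ B j 0 then ε j * (-1 : ℤ)^(k : ℕ) else 0) := fun k =>
            if_congr (and_iff_left htc) rfl rfl
          rw [Finset.sum_congr rfl fun k _ => hk k, Finset.sum_ite_mem,
            Finset.univ_inter, ← Finset.mul_sum]
        · rw [if_neg htc]
          symm
          apply Finset.sum_eq_zero
          intro k _
          rw [if_neg (fun h => htc h.2)]
      calc ∑ j, (if tc j y then ε j * s j else 0)
          = ∑ j, ∑ k : Fin (t+1), (if k ∈ B j 0 ∧ tc j y
              then ε j * (-1 : ℤ)^(k : ℕ) else 0) := by
            exact Finset.sum_congr rfl fun j _ => inner j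
        _ = ∑ k : Fin (t+1), ∑ j, (if k ∈ B j 0 ∧ tc j y
              then ε j * (-1 : ℤ)^(k : ℕ) else 0) := Finset.sum_comm
        _ = ∑ k : Fin (t+1), (-1 : ℤ)^(k : ℕ) *
              ∑ j, (if k ∈ B j 0 ∧ tc j y then ε j else 0) := by
            apply Finset.sum_congr rfl
            intro k _
            rw [Finset.mul_sum]
            apply Finset.sum_congr rfl
            intro j _
            by_cases h' : k ∈ B j 0 ∧ tc j y <;> simp [h', mul_comm]
        _ = ∑ k : Fin (t+1), (-1 : ℤ)^(k : ℕ) * 1 := by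
            apply Finset.sum_congr rfl
            intro k _
            congr 1
            have := hcov (Fin.cons k y)
            rw [← this]
            apply Finset.sum_congr rfl
            intro j _
            exact if_congr ((hc j k y).symm) rfl rfl
        _ = 1 := by simpa using htot
    -- M equation
    have hM : ∀ y : Fin d → Fin (t+1),
        ∑ j, (if pM j ∧ tc j y then -(ε j * s j) else 0) = 1 := by
      intro y
      have point : ∀ j, (if pM j ∧ tc j y then -(ε j * s j) else 0)
          = (if pL j ∧ tc j y then ε j else 0)
            + (if pR j ∧ tc j y then ε j else 0)
            - (if tc j y then ε j * s j else 0) := by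
        intro j
        by_cases htc : tc j y
        · by_cases hL' : pL j
          · have hnR : ¬ pR j := fun hr => hdisj j ⟨hL', hr⟩
            have hnM : ¬ pM j := fun hm => hm.1 hL'
            simp [htc, hL', hnR, hnM, hsL j hL']
          · by_cases hR' : pR j
            · have hnM : ¬ pM j := fun hm => hm.2 hR'
              simp [htc, hL', hR', hnM, hsR j hR']
            · have hM' : pM j := ⟨hL', hR'⟩
              rw [if_pos ⟨hM', htc⟩, if_pos htc,
                if_neg (fun h : pL j ∧ tc j y => hL' h.1),
                if_neg (fun h : pR j ∧ tc j y => hR' h.1)]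
              ring
        · rw [if_neg (fun h : pM j ∧ tc j y => htc h.2), if_neg htc,
            if_neg (fun h : pL j ∧ tc j y => htc h.2),
            if_neg (fun h : pR j ∧ tc j y => htc h.2)]
          ring
      rw [Finset.sum_congr rfl fun j _ => point j]
      rw [Finset.sum_sub_distrib, Finset.sum_add_distrib, hL y, hR y, hA y]
      norm_num
    -- apply induction hypothesis to the three subfamilies
    have cardL : 3 ^ d ≤ Fintype.card {j // pL j} := by
      apply ih {j // pL j} inferInstance (fun j i => B j.1 i.succ) (fun j => ε j.1)
        (fun j i => hp j.1 i.succ) (fun j i => ho j.1 i.succ) (fun j i => hb j.1 i.succ)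
      intro y
      rw [sum_subtype_ite pL (fun j => tc j y) ε]
      exact hL y
    have cardR : 3 ^ d ≤ Fintype.card {j // pR j} := by
      apply ih {j // pR j} inferInstance (fun j i => B j.1 i.succ) (fun j => ε j.1)
        (fun j i => hp j.1 i.succ) (fun j i => ho j.1 i.succ) (fun j i => hb j.1 i.succ)
      intro y
      rw [sum_subtype_ite pR (fun j => tc j y) ε]
      exact hR y
    have cardM : 3 ^ d ≤ Fintype.card {j // pM j} := by
      apply ih {j // pM j} inferInstance (fun j i => B j.1 i.succ)
        (fun j => -(ε j.1 * s j.1))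
        (fun j i => hp j.1 i.succ) (fun j i => ho j.1 i.succ) (fun j i => hb j.1 i.succ)
      intro y
      rw [sum_subtype_ite pM (fun j => tc j y) (fun j => -(ε j * s j))]
      exact hM y
    -- counting
    have hcount : (Finset.univ.filter pL).card + (Finset.univ.filter pR).card
        + (Finset.univ.filter pM).card ≤ Fintype.card ι := by
      have hd1 : Disjoint (Finset.univ.filter pL) (Finset.univ.filter pR) := by
        rw [Finset.disjoint_left]
        intro j hjl hjr
        rw [Finset.mem_filter] at hjl hjr
        exact hdisj j ⟨hjl.2, hjr.2⟩
      have hd2 : Disjoint (Finset.univ.filter pL ∪ Finset.univ.filter pR)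
          (Finset.univ.filter pM) := by
        rw [Finset.disjoint_left]
        intro j hj hjm
        rw [Finset.mem_filter] at hjm
        rw [Finset.mem_union, Finset.mem_filter, Finset.mem_filter] at hj
        rcases hj with h | h
        · exact hjm.2.1 h.2
        · exact hjm.2.2 h.2
      calc (Finset.univ.filter pL).card + (Finset.univ.filter pR).card
            + (Finset.univ.filter pM).card
          = (Finset.univ.filter pL ∪ Finset.univ.filter pR ∪ Finset.univ.filter pM).card := by
            rw [Finset.card_union_of_disjoint hd2, Finset.card_union_of_disjoint hd1]
        _ ≤ Finset.univ.card := Finset.card_le_card (Finset.subset_univ _)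
        _ = Fintype.card ι := rfl
    rw [Fintype.card_subtype] at cardL cardR cardM
    have eL : (Finset.univ.filter (fun x => pL x)).card = (Finset.univ.filter pL).card := rfl
    have eR : (Finset.univ.filter (fun x => pR x)).card = (Finset.univ.filter pR).card := rfl
    have eM : (Finset.univ.filter (fun x => pM x)).card = (Finset.univ.filter pM).card := rfl
    rw [eL] at cardL
    rw [eR] at cardR
    rw [eM] at cardM
    have h3 : 3 ^ (d + 1) = 3 ^ d + 3 ^ d + 3 ^ d := by ring
    omega

/-- If `n ≥ 3` is odd and `d ≥ 1`, then any partition of `[n]^d` into `m`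
proper odd bricks satisfies `m ≥ 3^d`. Points of `[n]^d` are modelled as
functions `Fin d → Fin n`; a brick is a box `B j` whose side sets `B j i` are
intervals `Finset.Icc a b` in `Fin n`, each nonempty, proper (`≠ univ`) and
of odd size; "partition" means every point lies in exactly one brick. -/
theorem stmt_3 (n d m : ℕ) (hn : 3 ≤ n) (hodd : Odd n) (hd : 1 ≤ d)
    (B : Fin m → Fin d → Finset (Fin n))
    (hne : ∀ j i, (B j i).Nonempty)
    (hproper : ∀ j i, B j i ≠ Finset.univ)
    (hoddbox : ∀ j i, Odd (B j i).card)
    (hbrick : ∀ j i, ∃ a b : Fin n, B j i = Finset.Icc a b)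
    (hpart : ∀ x : Fin d → Fin n, ∃! j, ∀ i, x i ∈ B j i) :
    3 ^ d ≤ m := by
  classical
  have hcov : ∀ x : Fin d → Fin n,
      ∑ j, (if ∀ i, x i ∈ B j i then (1 : ℤ) else 0) = 1 := by
    intro x
    obtain ⟨j0, hj0, huniq⟩ := hpart x
    rw [Finset.sum_boole]
    have : Finset.univ.filter (fun j => ∀ i, x i ∈ B j i) = {j0} := by
      ext j
      simp only [Finset.mem_filter, Finset.mem_univ, true_and, Finset.mem_singleton]
      exact ⟨fun h => huniq j h, fun h => h ▸ hj0⟩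
    rw [this]
    simp
  have := key_lemma n hodd d (Fin m) inferInstance B (fun _ => 1)
    hproper hoddbox hbrick hcov
  simpa using this
end

section
/- Let n ≥ 3 be an odd integer and d ≥ 1 an arbitrary integer. If B^1, B^2, …, B^m is a finite list of proper odd bricks in [n]^d such that every point of [n]^d belongs to an odd number of the bricks B^j (counted with multiplicity in the list), then m ≥ 3^d. -/
/-- If `n ≥ 3` is odd and `d ≥ 1`, and `B 0, …, B (m-1)` is a list of proper
odd bricks in `[n]^d` such that every point of `[n]^d` belongs to an odd
number of the bricks (counted with multiplicity in the list), then `m ≥ 3^d`.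
Points of `[n]^d` are modelled as functions `Fin d → Fin n`; a brick is a box
`B j` whose side sets `B j i` are intervals `Finset.Icc a b` in `Fin n`, each
nonempty, proper (`≠ univ`) and of odd size. -/
theorem stmt_4 (n d m : ℕ) (hn : 3 ≤ n) (hodd : Odd n) (hd : 1 ≤ d)
    (B : Fin m → Fin d → Finset (Fin n))
    (hne : ∀ j i, (B j i).Nonempty)
    (hproper : ∀ j i, B j i ≠ Finset.univ)
    (hoddbox : ∀ j i, Odd (B j i).card)
    (hbrick : ∀ j i, ∃ a b : Fin n, B j i = Finset.Icc a b)
    (hcover : ∀ x : Fin d → Fin n,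
      Odd (Finset.univ.filter (fun j : Fin m => ∀ i, x i ∈ B j i)).card) :
    3 ^ d ≤ m := by
  have hn0 : 0 < n := by omega
  set z : Fin n := ⟨0, hn0⟩ with hz
  set L : Fin n := ⟨n - 1, by omega⟩ with hLdef
  set W : Fin 3 → Fin n → ZMod 2 := fun t y =>
    if t = 0 then (if y = z then 1 else 0)
    else if t = 1 then (if y = L then 1 else 0)
    else (1 + (if y = z then 1 else 0) + (if y = L then 1 else 0)) with hW
  set T : Finset (Fin n) → Fin 3 := fun s =>
    if z ∈ s then 0 else if L ∈ s then 1 else 2 with hT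
  have hcast : ∀ k : ℕ, Odd k → (k : ZMod 2) = 1 := by
    intro k hk
    rw [← ZMod.natCast_mod, Nat.odd_iff.mp hk, Nat.cast_one]
  have hWsum : ∀ t : Fin 3, ∑ y : Fin n, W t y = 1 := by
    intro t
    fin_cases t
    · simp [hW, Finset.sum_ite_eq']
    · simp [hW, Finset.sum_ite_eq']
    · simp [hW, Finset.sum_add_distrib, Finset.sum_ite_eq']
      rw [hcast n hodd]
      decide
  have hnotboth : ∀ j i, ¬ (z ∈ B j i ∧ L ∈ B j i) := by
    rintro j i ⟨h1, h2⟩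
    obtain ⟨a, b, hab⟩ := hbrick j i
    apply hproper j i
    rw [hab] at h1 h2 ⊢
    rw [Finset.mem_Icc] at h1 h2
    apply Finset.eq_univ_iff_forall.mpr
    intro x
    rw [Finset.mem_Icc]
    constructor
    · exact h1.1.trans (by simp [Fin.le_def, hz])
    · refine le_trans ?_ h2.2
      simp only [Fin.le_def, hLdef]
      omega
  have hkey : ∀ j i (t : Fin 3),
      ∑ y ∈ B j i, W t y = if T (B j i) = t then 1 else 0 := by
    intro j i t
    have hA : ∑ y ∈ B j i, (if y = z then (1:ZMod 2) else 0)
        = if z ∈ B j i then 1 else 0 := Finset.sum_ite_eq' _ _ _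
    have hB : ∑ y ∈ B j i, (if y = L then (1:ZMod 2) else 0)
        = if L ∈ B j i then 1 else 0 := Finset.sum_ite_eq' _ _ _
    have hcard : ∑ y ∈ B j i, (1 : ZMod 2) = 1 := by
      rw [Finset.sum_const, nsmul_eq_mul, mul_one, hcast _ (hoddbox j i)]
    by_cases hzm : z ∈ B j i
    · have hLm : L ∉ B j i := fun h => hnotboth j i ⟨hzm, h⟩
      fin_cases t <;>
        simp [hW, hT, hzm, hLm, Finset.sum_add_distrib, hA, hB, hcard,
          CharTwo.add_self_eq_zero]
    · by_cases hLm : L ∈ B j i <;>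
        fin_cases t <;>
          simp [hW, hT, hzm, hLm, Finset.sum_add_distrib, hA, hB, hcard,
            CharTwo.add_self_eq_zero]
  have hmain : ∀ t : Fin d → Fin 3, ∃ j : Fin m, ∀ i, T (B j i) = t i := by
    intro t
    by_contra hcon
    push_neg at hcon
    have hS1 : ∑ x : Fin d → Fin n,
        (∏ i, W (t i) (x i)) *
          ((Finset.univ.filter (fun j : Fin m => ∀ i, x i ∈ B j i)).card : ZMod 2)
        = 1 := by
      have h1 : ∀ x : Fin d → Fin n,
          ((Finset.univ.filter (fun j : Fin m => ∀ i, x i ∈ B j i)).card : ZMod 2) = 1 :=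
        fun x => hcast _ (hcover x)
      simp_rw [h1, mul_one]
      rw [← Fintype.prod_sum (fun i y => W (t i) y)]
      simp [hWsum]
    have hS2 : ∑ x : Fin d → Fin n,
        (∏ i, W (t i) (x i)) *
          ((Finset.univ.filter (fun j : Fin m => ∀ i, x i ∈ B j i)).card : ZMod 2)
        = 0 := by
      have hcount : ∀ x : Fin d → Fin n,
          ((Finset.univ.filter (fun j : Fin m => ∀ i, x i ∈ B j i)).card : ZMod 2)
          = ∑ j : Fin m, ∏ i, (if x i ∈ B j i then (1:ZMod 2) else 0) := by
        intro x
        rw [Finset.card_filter]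
        push_cast
        refine Finset.sum_congr rfl fun j _ => ?_
        rw [Finset.prod_boole]
        simp
      simp_rw [hcount, Finset.mul_sum]
      rw [Finset.sum_comm]
      refine Finset.sum_eq_zero fun j _ => ?_
      have heq : ∀ x : Fin d → Fin n,
          (∏ i, W (t i) (x i)) * ∏ i, (if x i ∈ B j i then (1:ZMod 2) else 0)
          = ∏ i, (W (t i) (x i) * if x i ∈ B j i then (1:ZMod 2) else 0) := by
        intro x
        rw [← Finset.prod_mul_distrib]
      simp_rw [heq]
      rw [← Fintype.prod_sum
        (fun i y => W (t i) y * if y ∈ B j i then (1:ZMod 2) else 0)]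
      have hfac : ∀ i, ∑ y : Fin n, (W (t i) y * if y ∈ B j i then (1:ZMod 2) else 0)
          = if T (B j i) = t i then 1 else 0 := by
        intro i
        rw [← hkey j i (t i)]
        simp only [mul_ite, mul_one, mul_zero]
        rw [Finset.sum_ite_mem, Finset.univ_inter]
      rw [Finset.prod_congr rfl fun i _ => hfac i, Finset.prod_boole]
      rw [if_neg]
      intro h
      obtain ⟨i, hi⟩ := hcon j
      exact hi (h i (Finset.mem_univ i))
    rw [hS1] at hS2
    exact one_ne_zero hS2
  choose f hf using hmain
  have hinj : Function.Injective f := by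
    intro t t' h
    funext i
    rw [← hf t i, ← hf t' i, h]
  calc 3 ^ d = Fintype.card (Fin d → Fin 3) := by simp
    _ ≤ Fintype.card (Fin m) := Fintype.card_le_of_injective f hinj
    _ = m := by simp
end

section
/- Let n > 2 be an odd integer and d ≥ 1 an integer. If {B^1, B^2, …, B^m} is a partition of [n]^d into odd proper boxes, then m ≥ (2 + 1/(2^{n-2} − 1))^d. -/
open Finset

lemma odd_count {α : Type*} [DecidableEq α] (T : Finset α) (hT : T.Nonempty) :
    (T.powerset.filter fun X => Odd X.card).card = 2 ^ (T.card - 1) := by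
  have h0 : ∑ X ∈ T.powerset, (-1 : ℤ) ^ X.card = 0 :=
    Finset.sum_powerset_neg_one_pow_card_of_nonempty hT
  rw [← Finset.sum_filter_add_sum_filter_not T.powerset (fun X => Odd X.card)] at h0
  have he : ∀ X ∈ T.powerset.filter (fun X => Odd X.card), (-1 : ℤ) ^ X.card = -1 := by
    intro X hX; rw [mem_filter] at hX; exact Odd.neg_one_pow hX.2
  have ho : ∀ X ∈ T.powerset.filter (fun X => ¬ Odd X.card), (-1 : ℤ) ^ X.card = 1 := by
    intro X hX; rw [mem_filter] at hX
    exact Even.neg_one_pow (Nat.not_odd_iff_even.1 hX.2)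
  rw [Finset.sum_congr rfl he, Finset.sum_congr rfl ho, Finset.sum_const, Finset.sum_const] at h0
  have hsum : (T.powerset.filter fun X => Odd X.card).card
      + (T.powerset.filter fun X => ¬ Odd X.card).card = 2 ^ T.card := by
    rw [Finset.card_filter_add_card_filter_not, card_powerset]
  have heq : (T.powerset.filter fun X => Odd X.card).card
      = (T.powerset.filter fun X => ¬ Odd X.card).card := by
    have := h0
    simp only [nsmul_eq_mul, mul_neg, mul_one] at this
    omega
  have : 2 * (T.powerset.filter fun X => Odd X.card).card = 2 ^ T.card := by omega
  have hc : 1 ≤ T.card := Finset.card_pos.2 hT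
  have : 2 * (T.powerset.filter fun X => Odd X.card).card = 2 * 2 ^ (T.card - 1) := by
    rw [this, ← pow_succ']
    congr 1; omega
  omega

lemma even_count {α : Type*} [DecidableEq α] (T : Finset α) (hT : T.Nonempty) :
    (T.powerset.filter fun X => Even X.card).card = 2 ^ (T.card - 1) := by
  have h1 := odd_count T hT
  have hsum : (T.powerset.filter fun X => Odd X.card).card
      + (T.powerset.filter fun X => ¬ Odd X.card).card = 2 ^ T.card := by
    rw [Finset.card_filter_add_card_filter_not, card_powerset]
  have : (T.powerset.filter fun X => ¬ Odd X.card) = (T.powerset.filter fun X => Even X.card) := by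
    apply filter_congr; intro X _; simp [Nat.not_odd_iff_even]
  rw [this] at hsum
  have hc : 1 ≤ T.card := Finset.card_pos.2 hT
  have h2 : 2 ^ T.card = 2 * 2 ^ (T.card - 1) := by
    rw [← pow_succ']; congr 1; omega
  omega

lemma count2 {m : ℕ} (S : Finset (Fin m)) (hS : S.Nonempty) (hSp : S ≠ univ) :
    ((univ : Finset (Finset (Fin m))).filter fun A => Odd A.card ∧ Odd (A ∩ S).card).card
      = 2 ^ (m - 2) := by
  have hSc : Sᶜ.Nonempty := by
    rw [Finset.nonempty_iff_ne_empty]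
    intro h
    exact hSp (by simpa [Finset.compl_eq_empty_iff] using h)
  have hcard : ((univ : Finset (Finset (Fin m))).filter
        fun A => Odd A.card ∧ Odd (A ∩ S).card).card
      = ((S.powerset.filter fun X => Odd X.card) ×ˢ
          (Sᶜ.powerset.filter fun Y => Even Y.card)).card := by
    apply Finset.card_bij' (fun A _ => (A ∩ S, A \ S)) (fun p _ => p.1 ∪ p.2)
    · intro A hA
      rw [mem_filter] at hA
      obtain ⟨-, hA1, hA2⟩ := hA
      rw [mem_product, mem_filter, mem_filter, mem_powerset, mem_powerset]
      refine ⟨⟨inter_subset_right, hA2⟩, ?_, ?_⟩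
      · intro a ha; simp only [mem_sdiff] at ha; simpa using ha.2
      · have := card_inter_add_card_sdiff A S
        rcases Nat.even_or_odd (A \ S).card with h | h
        · exact h
        · exfalso
          have : Even A.card := by
            rw [← this]; exact hA2.add_odd h
          exact (Nat.not_odd_iff_even.2 this) hA1
    · intro p hp
      rw [mem_product, mem_filter, mem_filter, mem_powerset, mem_powerset] at hp
      obtain ⟨⟨h1, h2⟩, h3, h4⟩ := hp
      have hdisj : Disjoint p.1 p.2 := by
        apply Finset.disjoint_left.2
        intro a ha1 ha2
        exact (by simpa using h3 ha2 : a ∉ S) (h1 ha1)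
      rw [mem_filter]
      have hPS : (p.1 ∪ p.2) ∩ S = p.1 := by
        ext a
        simp only [mem_inter, mem_union]
        constructor
        · rintro ⟨h | h, haS⟩
          · exact h
          · exact absurd haS (by simpa using h3 h)
        · intro h; exact ⟨Or.inl h, h1 h⟩
      refine ⟨mem_univ _, ?_, by rwa [hPS]⟩
      rw [card_union_of_disjoint hdisj]
      exact h2.add_even h4
    · intro A hA
      ext a; simp only [mem_union, mem_inter, mem_sdiff]; tauto
    · intro p hp
      rw [mem_product, mem_filter, mem_filter, mem_powerset, mem_powerset] at hp
      obtain ⟨⟨h1, h2⟩, h3, h4⟩ := hp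
      have h3' : ∀ a ∈ p.2, a ∉ S := by intro a ha; simpa using h3 ha
      ext a
      · simp only [mem_inter, mem_union]
        constructor
        · rintro ⟨h | h, haS⟩
          · exact h
          · exact absurd haS (h3' _ h)
        · intro h; exact ⟨Or.inl h, h1 h⟩
      · simp only [mem_sdiff, mem_union]
        constructor
        · rintro ⟨h | h, haS⟩
          · exact absurd (h1 h) haS
          · exact h
        · intro h; exact ⟨Or.inr h, h3' _ h⟩
  rw [hcard, card_product, odd_count S hS, even_count Sᶜ hSc, card_compl]
  rw [← pow_add]
  congr 1
  have h1 : 1 ≤ S.card := card_pos.2 hS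
  have h2 : S.card < Fintype.card (Fin m) := by
    have := card_lt_card (lt_of_le_of_ne (subset_univ S) hSp)
    simpa using this
  simp only [Fintype.card_fin] at h2 ⊢
  omega

lemma count3 {m : ℕ} (hm : Odd m) (S : Finset (Fin m)) (hS : S.Nonempty) (hSp : S ≠ univ)
    (hSo : Odd S.card) :
    ((univ : Finset (Finset (Fin m))).filter
        fun A => (Odd A.card ∧ A ≠ univ) ∧ Odd (A ∩ S).card).card
      = 2 ^ (m - 2) - 1 := by
  have key := count2 S hS hSp
  have hmem : (univ : Finset (Fin m)) ∈
      (univ : Finset (Finset (Fin m))).filter fun A => Odd A.card ∧ Odd (A ∩ S).card := by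
    rw [mem_filter]
    refine ⟨mem_univ _, by simpa using hm, by simpa using hSo⟩
  have heq : ((univ : Finset (Finset (Fin m))).filter
        fun A => (Odd A.card ∧ A ≠ univ) ∧ Odd (A ∩ S).card)
      = ((univ : Finset (Finset (Fin m))).filter
        fun A => Odd A.card ∧ Odd (A ∩ S).card).erase univ := by
    ext A
    simp only [mem_erase, mem_filter, mem_univ, true_and]
    tauto
  rw [heq, card_erase_of_mem hmem, key]

lemma partition_count {n d m : ℕ} (B : Fin m → Fin d → Finset (Fin n))
    (hpart : ∀ x : Fin d → Fin n, ∃! j, ∀ i, x i ∈ B j i)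
    (A : Fin d → Finset (Fin n)) :
    ∑ j : Fin m, ∏ i, (A i ∩ B j i).card = ∏ i, (A i).card := by
  have h1 : ∏ i, (A i).card = (Fintype.piFinset A).card := by
    rw [Fintype.card_piFinset]
  have h2 : ∀ j, ∏ i, (A i ∩ B j i).card
      = ((Fintype.piFinset A).filter fun x => ∀ i, x i ∈ B j i).card := by
    intro j
    rw [← Fintype.card_piFinset]
    congr 1
    ext x
    simp only [Fintype.mem_piFinset, mem_filter, mem_inter]
    constructor
    · intro h; exact ⟨fun i => (h i).1, fun i => (h i).2⟩
    · intro h i; exact ⟨h.1 i, h.2 i⟩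
  rw [h1]
  calc ∑ j : Fin m, ∏ i, (A i ∩ B j i).card
      = ∑ j : Fin m, ((Fintype.piFinset A).filter fun x => ∀ i, x i ∈ B j i).card := by
        exact Finset.sum_congr rfl fun j _ => h2 j
    _ = ∑ j : Fin m, ∑ x ∈ Fintype.piFinset A, if ∀ i, x i ∈ B j i then 1 else 0 := by
        apply Finset.sum_congr rfl
        intro j _
        rw [Finset.card_filter]
    _ = ∑ x ∈ Fintype.piFinset A, ∑ j : Fin m, if ∀ i, x i ∈ B j i then 1 else 0 := by
        rw [Finset.sum_comm]
    _ = ∑ x ∈ Fintype.piFinset A, 1 := by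
        apply Finset.sum_congr rfl
        intro x _
        obtain ⟨j0, hj0, huniq⟩ := hpart x
        rw [Finset.sum_eq_single j0]
        · simp [hj0]
        · intro j _ hne
          simp only [ite_eq_right_iff]
          intro hj
          exact absurd (huniq j hj) hne
        · intro h; exact absurd (mem_univ j0) h
    _ = (Fintype.piFinset A).card := by simp

/-- If `n > 2` is odd and `d ≥ 1`, then any partition of `[n]^d` into `m`
odd proper boxes satisfies `m ≥ (2 + 1/(2^(n-2) - 1))^d`. Points of `[n]^d`
are modelled as functions `Fin d → Fin n`; a box is given by its side sets
`B j i ⊆ Fin n`, each nonempty, proper (`≠ univ`) and of odd size, and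
"partition" means every point lies in exactly one box. -/
theorem stmt_5 (n d m : ℕ) (hn : 2 < n) (hodd : Odd n) (hd : 1 ≤ d)
    (B : Fin m → Fin d → Finset (Fin n))
    (hne : ∀ j i, (B j i).Nonempty)
    (hproper : ∀ j i, B j i ≠ Finset.univ)
    (hoddbox : ∀ j i, Odd (B j i).card)
    (hpart : ∀ x : Fin d → Fin n, ∃! j, ∀ i, x i ∈ B j i) :
    ((2 : ℝ) + 1 / (2 ^ (n - 2) - 1)) ^ d ≤ (m : ℝ) := by
  classical
  set P : Finset (Finset (Fin n)) :=
    univ.filter (fun S => Odd S.card ∧ S ≠ univ) with hP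
  -- card of P is 2^(n-1) - 1
  have hPcard : P.card = 2 ^ (n - 1) - 1 := by
    have huniv : (univ : Finset (Fin n)).Nonempty := by
      rw [univ_nonempty_iff]; exact Fin.pos_iff_nonempty.1 (by omega)
    have h1 := odd_count (univ : Finset (Fin n)) huniv
    have humem : (univ : Finset (Fin n)) ∈
        ((univ : Finset (Fin n)).powerset.filter fun X => Odd X.card) := by
      rw [mem_filter]; exact ⟨mem_powerset_self _, by simpa using hodd⟩
    have heq : P = ((univ : Finset (Fin n)).powerset.filter
        fun X => Odd X.card).erase univ := by
      ext S
      simp only [hP, mem_erase, mem_filter, mem_univ, true_and, mem_powerset,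
        subset_univ, Finset.powerset_univ]
      tauto
    rw [heq, card_erase_of_mem humem, h1, card_univ, Fintype.card_fin]
  -- the family of tuples
  set 𝒜 : Finset (Fin d → Finset (Fin n)) := Fintype.piFinset (fun _ => P) with h𝒜
  have h𝒜card : 𝒜.card = (2 ^ (n - 1) - 1) ^ d := by
    rw [h𝒜, Fintype.card_piFinset]
    simp [hPcard]
  -- every tuple in 𝒜 is "covered" by some box
  have hcover : ∀ A ∈ 𝒜, ∃ j : Fin m, ∀ i, Odd ((A i) ∩ B j i).card := by
    intro A hA
    have hAmem : ∀ i, Odd (A i).card ∧ A i ≠ univ := by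
      intro i
      have := (Fintype.mem_piFinset.1 hA) i
      rw [hP, mem_filter] at this
      exact this.2
    have hprododd : Odd (∏ i, (A i).card) := by
      rw [Nat.odd_iff, Finset.prod_nat_mod]
      have : ∀ i ∈ (univ : Finset (Fin d)), (A i).card % 2 = 1 := by
        intro i _; exact Nat.odd_iff.1 (hAmem i).1
      rw [Finset.prod_congr rfl this]
      simp
    rw [← partition_count B hpart A] at hprododd
    -- odd sum ⇒ some term odd
    by_contra hcon
    push_neg at hcon
    have heven : Even (∑ j : Fin m, ∏ i, (A i ∩ B j i).card) := by
      apply Finset.even_sum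
      intro j _
      obtain ⟨i, hi⟩ := hcon j
      have hdvd : (A i ∩ B j i).card ∣ ∏ i, (A i ∩ B j i).card :=
        Finset.dvd_prod_of_mem _ (mem_univ i)
      obtain ⟨c, hc⟩ := hdvd
      rw [hc]
      exact (Nat.not_odd_iff_even.1 hi).mul_right c
    exact (Nat.not_even_iff_odd.2 hprododd) heven
  -- counting
  have hGcard : ∀ j : Fin m,
      (𝒜.filter fun A => ∀ i, Odd ((A i) ∩ B j i).card).card = (2 ^ (n - 2) - 1) ^ d := by
    intro j
    have heq : (𝒜.filter fun A => ∀ i, Odd ((A i) ∩ B j i).card)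
        = Fintype.piFinset (fun i => P.filter fun S => Odd (S ∩ B j i).card) := by
      ext A
      simp only [h𝒜, mem_filter, Fintype.mem_piFinset]
      constructor
      · rintro ⟨h1, h2⟩ i; exact ⟨h1 i, h2 i⟩
      · intro h; exact ⟨fun i => (h i).1, fun i => (h i).2⟩
    rw [heq, Fintype.card_piFinset]
    have hcc : ∀ i : Fin d, (P.filter fun S => Odd (S ∩ B j i).card).card
        = 2 ^ (n - 2) - 1 := by
      intro i
      have := count3 hodd (B j i) (hne j i) (hproper j i) (hoddbox j i)
      rw [← this, hP, Finset.filter_filter]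
    rw [Finset.prod_congr rfl (fun i _ => hcc i)]
    simp
  have hmain : (2 ^ (n - 1) - 1) ^ d ≤ m * (2 ^ (n - 2) - 1) ^ d := by
    have hsub : 𝒜 ⊆ (univ : Finset (Fin m)).biUnion
        (fun j => 𝒜.filter fun A => ∀ i, Odd ((A i) ∩ B j i).card) := by
      intro A hA
      obtain ⟨j, hj⟩ := hcover A hA
      exact mem_biUnion.2 ⟨j, mem_univ j, mem_filter.2 ⟨hA, hj⟩⟩
    calc (2 ^ (n - 1) - 1) ^ d = 𝒜.card := h𝒜card.symm
      _ ≤ ((univ : Finset (Fin m)).biUnion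
          (fun j => 𝒜.filter fun A => ∀ i, Odd ((A i) ∩ B j i).card)).card :=
          Finset.card_le_card hsub
      _ ≤ ∑ j : Fin m, (𝒜.filter fun A => ∀ i, Odd ((A i) ∩ B j i).card).card :=
          Finset.card_biUnion_le
      _ = m * (2 ^ (n - 2) - 1) ^ d := by
          rw [Finset.sum_congr rfl (fun j _ => hGcard j)]
          simp [mul_comm]
  -- convert to reals
  set a : ℝ := 2 ^ (n - 2) with ha
  have ha2 : (2 : ℝ) ≤ a := by
    rw [ha]
    calc (2:ℝ) = 2 ^ 1 := (pow_one 2).symm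
    _ ≤ 2 ^ (n-2) := by apply pow_le_pow_right₀ (by norm_num); omega
  have hN2 : ((2 ^ (n - 2) - 1 : ℕ) : ℝ) = a - 1 := by
    rw [Nat.cast_sub (Nat.one_le_two_pow)]
    push_cast [ha]; ring
  have hN1 : ((2 ^ (n - 1) - 1 : ℕ) : ℝ) = 2 * a - 1 := by
    rw [Nat.cast_sub (Nat.one_le_two_pow)]
    have : (n : ℕ) - 1 = (n - 2) + 1 := by omega
    rw [this]
    push_cast [ha]; ring
  have hcast : ((2 : ℝ) * a - 1) ^ d ≤ (m : ℝ) * (a - 1) ^ d := by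
    rw [← hN1, ← hN2]
    exact_mod_cast hmain
  have hpos : (0 : ℝ) < a - 1 := by linarith
  have hform : (2 : ℝ) + 1 / (a - 1) = (2 * a - 1) / (a - 1) := by
    field_simp
    ring
  rw [hform, div_pow, div_le_iff₀ (by positivity)]
  exact hcast
end

section
/- Let 2 < n ≤ m be odd integers and d ≥ 1 an integer. If there exists a partition of [n]^d into s odd proper boxes, then there exists a partition of [m]^d into s odd proper boxes. -/
/-- Monotonicity: if `2 < n ≤ m` are odd and `d ≥ 1`, and `[n]^d` admits a
partition into `s` odd proper boxes, then so does `[m]^d`. Points of `[n]^d`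
are modelled as functions `Fin d → Fin n`; a box is given by its side sets,
each nonempty, proper (`≠ univ`) and of odd size, and "partition" means
every point lies in exactly one box. -/
theorem stmt_6 (n m s d : ℕ) (hn : 2 < n) (hnm : n ≤ m)
    (hnodd : Odd n) (hmodd : Odd m) (hd : 1 ≤ d)
    (h : ∃ B : Fin s → Fin d → Finset (Fin n),
      (∀ j i, (B j i).Nonempty) ∧
      (∀ j i, B j i ≠ Finset.univ) ∧
      (∀ j i, Odd (B j i).card) ∧
      (∀ x : Fin d → Fin n, ∃! j, ∀ i, x i ∈ B j i)) :
    ∃ B : Fin s → Fin d → Finset (Fin m),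
      (∀ j i, (B j i).Nonempty) ∧
      (∀ j i, B j i ≠ Finset.univ) ∧
      (∀ j i, Odd (B j i).card) ∧
      (∀ x : Fin d → Fin m, ∃! j, ∀ i, x i ∈ B j i) := by
  obtain ⟨B, hne, hpr, hodd, hpart⟩ := h
  have hn0 : 0 < n := by omega
  -- collapsing map
  set φ : Fin m → Fin n := fun x => if hx : (x : ℕ) < n then ⟨x, hx⟩ else ⟨0, hn0⟩ with hφ
  have hφ_lt : ∀ (x : Fin m) (hx : (x : ℕ) < n), φ x = ⟨x, hx⟩ := by
    intro x hx; simp [hφ, hx]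
  -- fibers of φ have odd cardinality
  have hfiber : ∀ a : Fin n, Odd (Finset.univ.filter (fun x : Fin m => φ x = a)).card := by
    intro a
    by_cases ha : (a : ℕ) = 0
    · -- fiber of 0: complement of {x | 0 < x < n}
      have hcompl : (Finset.univ.filter (fun x : Fin m => φ x = a))
          = Finset.univ \ ((Finset.range n).erase 0).attachFin
            (fun x hx => lt_of_lt_of_le ((Finset.mem_range).mp (Finset.mem_of_mem_erase hx)) hnm) := by
        ext x
        simp only [Finset.mem_filter, Finset.mem_sdiff, Finset.mem_univ, true_and,
          Finset.mem_attachFin, Finset.mem_erase, Finset.mem_range]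
        constructor
        · intro hx
          by_cases hxn : (x : ℕ) < n
          · rw [hφ_lt x hxn] at hx
            have : (x : ℕ) = (a : ℕ) := by
              have := congrArg Fin.val hx; simpa using this
            omega
          · omega
        · intro hx
          by_cases hxn : (x : ℕ) < n
          · have hx0 : (x : ℕ) = 0 := by omega
            rw [hφ_lt x hxn]
            exact Fin.ext (by simp; omega)
          · simp only [hφ]
            rw [dif_neg hxn]
            exact Fin.ext (by simp; omega)
      rw [hcompl, Finset.card_sdiff_of_subset (Finset.subset_univ _)]
      rw [Finset.card_attachFin, Finset.card_erase_of_mem (by simp; omega),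
        Finset.card_range, Finset.card_univ, Fintype.card_fin]
      have : Odd (m - (n - 1)) := by
        apply Nat.Odd.sub_even (by omega) hmodd
        obtain ⟨k, hk⟩ := hnodd; exact ⟨k, by omega⟩
      exact this
    · -- fiber of a ≠ 0 is the singleton {a}
      have hal : (a : ℕ) < m := lt_of_lt_of_le a.2 hnm
      have : (Finset.univ.filter (fun x : Fin m => φ x = a)) = {⟨a, hal⟩} := by
        ext x
        simp only [Finset.mem_filter, Finset.mem_univ, true_and, Finset.mem_singleton]
        constructor
        · intro hx
          by_cases hxn : (x : ℕ) < n
          · rw [hφ_lt x hxn] at hx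
            have := congrArg Fin.val hx
            exact Fin.ext (by simpa using this)
          · exfalso; apply ha
            simp only [hφ] at hx; rw [dif_neg hxn] at hx
            exact (congrArg Fin.val hx).symm
        · intro hx
          subst hx
          rw [hφ_lt _ (by simpa using a.2)]
      rw [this]; simp
  refine ⟨fun j i => Finset.univ.filter (fun y : Fin m => φ y ∈ B j i), ?_, ?_, ?_, ?_⟩
  · intro j i
    obtain ⟨a, ha⟩ := hne j i
    have hal : (a : ℕ) < m := lt_of_lt_of_le a.2 hnm
    refine ⟨⟨a, hal⟩, ?_⟩
    simp only [Finset.mem_filter, Finset.mem_univ, true_and]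
    rw [hφ_lt _ (by simpa using a.2)]
    simpa using ha
  · intro j i hcon
    obtain ⟨a, ha⟩ : ∃ a, a ∉ B j i := by
      by_contra hc
      push_neg at hc
      exact hpr j i (Finset.eq_univ_iff_forall.mpr hc)
    have hal : (a : ℕ) < m := lt_of_lt_of_le a.2 hnm
    have hcon' : Finset.univ.filter (fun y : Fin m => φ y ∈ B j i) = Finset.univ := hcon
    have : (⟨a, hal⟩ : Fin m) ∈ Finset.univ.filter (fun y : Fin m => φ y ∈ B j i) := by
      rw [hcon']; exact Finset.mem_univ _
    simp only [Finset.mem_filter, Finset.mem_univ, true_and] at this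
    rw [hφ_lt _ (by simpa using a.2)] at this
    exact ha (by simpa using this)
  · intro j i
    have hcard : (Finset.univ.filter (fun y : Fin m => φ y ∈ B j i)).card
        = ∑ a ∈ B j i, ((Finset.univ.filter (fun y : Fin m => φ y ∈ B j i)).filter
            (fun y => φ y = a)).card := by
      apply Finset.card_eq_sum_card_fiberwise
      intro x hx
      exact (Finset.mem_filter.mp hx).2
    rw [hcard]
    have heq : ∀ a ∈ B j i, ((Finset.univ.filter (fun y : Fin m => φ y ∈ B j i)).filter
        (fun y => φ y = a)) = Finset.univ.filter (fun y : Fin m => φ y = a) := by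
      intro a ha
      rw [Finset.filter_filter]
      apply Finset.filter_congr
      intro x _
      constructor
      · exact fun hx => hx.2
      · intro hx; exact ⟨hx ▸ ha, hx⟩
    rw [Finset.sum_congr rfl (fun a ha => by rw [heq a ha])]
    rw [Finset.odd_sum_iff_odd_card_odd]
    have : (B j i).filter (fun a => Odd (Finset.univ.filter (fun y : Fin m => φ y = a)).card)
        = B j i := Finset.filter_true_of_mem (fun a _ => hfiber a)
    rw [this]
    exact hodd j i
  · intro x
    obtain ⟨j, hj, huniq⟩ := hpart (fun i => φ (x i))
    refine ⟨j, ?_, ?_⟩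
    · intro i
      simp only [Finset.mem_filter, Finset.mem_univ, true_and]
      exact hj i
    · intro j' hj'
      apply huniq
      intro i
      have := hj' i
      simpa using this
end

section
/- Let n ≥ 2 and d_1, d_2 ≥ 1 be integers. If there exists a partition of [n]^{d_1} into s_1 odd proper boxes and a partition of [n]^{d_2} into s_2 odd proper boxes, then there exists a partition of [n]^{d_1 + d_2} into s_1 · s_2 odd proper boxes. -/
/-- Submultiplicativity: if `n ≥ 2`, `d₁, d₂ ≥ 1`, and `[n]^{d₁}` admits a
partition into `s₁` odd proper boxes while `[n]^{d₂}` admits a partition into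
`s₂` odd proper boxes, then `[n]^{d₁+d₂}` admits a partition into `s₁ * s₂`
odd proper boxes. Points of `[n]^d` are modelled as functions
`Fin d → Fin n`; a box is given by its side sets, each nonempty, proper
(`≠ univ`) and of odd size, and "partition" means every point lies in
exactly one box. -/
theorem stmt_7 (n d₁ d₂ s₁ s₂ : ℕ) (hn : 2 ≤ n) (hd₁ : 1 ≤ d₁) (hd₂ : 1 ≤ d₂)
    (h₁ : ∃ B : Fin s₁ → Fin d₁ → Finset (Fin n),
      (∀ j i, (B j i).Nonempty) ∧
      (∀ j i, B j i ≠ Finset.univ) ∧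
      (∀ j i, Odd (B j i).card) ∧
      (∀ x : Fin d₁ → Fin n, ∃! j, ∀ i, x i ∈ B j i))
    (h₂ : ∃ B : Fin s₂ → Fin d₂ → Finset (Fin n),
      (∀ j i, (B j i).Nonempty) ∧
      (∀ j i, B j i ≠ Finset.univ) ∧
      (∀ j i, Odd (B j i).card) ∧
      (∀ x : Fin d₂ → Fin n, ∃! j, ∀ i, x i ∈ B j i)) :
    ∃ B : Fin (s₁ * s₂) → Fin (d₁ + d₂) → Finset (Fin n),
      (∀ j i, (B j i).Nonempty) ∧
      (∀ j i, B j i ≠ Finset.univ) ∧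
      (∀ j i, Odd (B j i).card) ∧
      (∀ x : Fin (d₁ + d₂) → Fin n, ∃! j, ∀ i, x i ∈ B j i) := by
  obtain ⟨B₁, hne₁, hpr₁, hodd₁, hpart₁⟩ := h₁
  obtain ⟨B₂, hne₂, hpr₂, hodd₂, hpart₂⟩ := h₂
  set e : Fin s₁ × Fin s₂ ≃ Fin (s₁ * s₂) := finProdFinEquiv
  refine ⟨fun k => Fin.addCases (fun i => B₁ (e.symm k).1 i) (fun i => B₂ (e.symm k).2 i),
    ?_, ?_, ?_, ?_⟩
  · intro j i
    induction i using Fin.addCases with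
    | left i => simpa using hne₁ _ i
    | right i => simpa using hne₂ _ i
  · intro j i
    induction i using Fin.addCases with
    | left i => simpa using hpr₁ _ i
    | right i => simpa using hpr₂ _ i
  · intro j i
    induction i using Fin.addCases with
    | left i => simpa using hodd₁ _ i
    | right i => simpa using hodd₂ _ i
  · intro x
    obtain ⟨j₁, hj₁, hu₁⟩ := hpart₁ (fun i => x (Fin.castAdd d₂ i))
    obtain ⟨j₂, hj₂, hu₂⟩ := hpart₂ (fun i => x (Fin.natAdd d₁ i))
    refine ⟨e (j₁, j₂), ?_, ?_⟩
    · intro i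
      induction i using Fin.addCases with
      | left i => simpa using hj₁ i
      | right i => simpa using hj₂ i
    · intro k hk
      have h1 : (e.symm k).1 = j₁ := by
        apply hu₁
        intro i
        simpa using hk (Fin.castAdd d₂ i)
      have h2 : (e.symm k).2 = j₂ := by
        apply hu₂
        intro i
        simpa using hk (Fin.natAdd d₁ i)
      have : e.symm k = (j₁, j₂) := Prod.ext h1 h2
      rw [← this, Equiv.apply_symm_apply]
end

section
/- Let n ≥ 2 be an even integer and d ≥ 1 an integer. Then there exists a partition of [n]^d into exactly 2^d odd proper boxes (so, combined with the 2^d lower bound for partitions into proper boxes, the minimum number of odd proper boxes needed to partition [n]^d is exactly 2^d). -/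
/-- If `n ≥ 2` is even and `d ≥ 1`, there is a partition of `[n]^d` into
exactly `2^d` odd proper boxes. Points of `[n]^d` are modelled as functions
`Fin d → Fin n`; a box is given by its side sets `B j i ⊆ Fin n`, each
nonempty, proper (`≠ univ`) and of odd size, and "partition" means every
point lies in exactly one box. -/
theorem stmt_8 (n d : ℕ) (hn : 2 ≤ n) (heven : Even n) (hd : 1 ≤ d) :
    ∃ B : Fin (2 ^ d) → Fin d → Finset (Fin n),
      (∀ j i, (B j i).Nonempty) ∧
      (∀ j i, B j i ≠ Finset.univ) ∧
      (∀ j i, Odd (B j i).card) ∧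
      (∀ x : Fin d → Fin n, ∃! j, ∀ i, x i ∈ B j i) := by
  have hpos : 0 < n := by omega
  set z : Fin n := ⟨0, hpos⟩ with hz
  set w : Fin n := ⟨1, by omega⟩ with hw
  have hone : w ∈ ({z}ᶜ : Finset (Fin n)) := by
    simp only [Finset.mem_compl, Finset.mem_singleton]
    intro h
    have : w.val = z.val := by rw [h]
    simp [hw, hz] at this
  set e := (finFunctionFinEquiv : (Fin d → Fin 2) ≃ Fin (2 ^ d)) with he
  refine ⟨fun j i => if (e.symm j) i = 0 then {z} else {z}ᶜ, ?_, ?_, ?_, ?_⟩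
  · intro j i
    dsimp only
    split
    · exact ⟨z, Finset.mem_singleton_self z⟩
    · exact ⟨w, hone⟩
  · intro j i
    dsimp only
    split
    · intro h
      have h1 : w ∈ ({z} : Finset (Fin n)) := h ▸ Finset.mem_univ _
      simp only [Finset.mem_compl, Finset.mem_singleton] at hone h1
      exact hone h1
    · intro h
      have h1 : z ∈ ({z}ᶜ : Finset (Fin n)) := h ▸ Finset.mem_univ _
      simp at h1
  · intro j i
    dsimp only
    split
    · simp
    · rw [Finset.card_compl, Finset.card_singleton, Fintype.card_fin]
      exact Nat.Even.sub_odd (by omega) heven odd_one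
  · intro x
    refine ⟨e (fun i => if x i = z then 0 else 1), ?_, ?_⟩
    · intro i
      dsimp only
      rw [Equiv.symm_apply_apply]
      by_cases hx : x i = z <;> simp [hx]
    · intro j hj
      have key : e.symm j = fun i => if x i = z then 0 else 1 := by
        funext i
        have := hj i
        dsimp only at this
        by_cases hb : (e.symm j) i = 0
        · rw [if_pos hb] at this
          simp only [Finset.mem_singleton] at this
          rw [hb, if_pos this]
        · rw [if_neg hb] at this
          simp only [Finset.mem_compl, Finset.mem_singleton] at this
          rw [if_neg this]
          omega
      calc j = e (e.symm j) := (Equiv.apply_symm_apply e j).symm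
        _ = _ := by rw [key]
end

section
/- Let k ≥ 2, d ≥ 1 and n ≥ k be integers. If {B^1, …, B^m} is a partition of [n]^d into proper bricks having the k-piercing property, then m ≥ d·2^{d−1}·(k−2) + 2^d. -/
open Finset

/-- The corner point of the cube determined by a sign vector. -/
def cnr {n d : ℕ} (lo hi : Fin n) (ε : Fin d → Bool) (i : Fin d) : Fin n :=
  if ε i then hi else lo

/-- For `k ≥ 2`, `d ≥ 1` and `n ≥ k`, any partition of `[n]^d` into `m`
proper bricks with the `k`-piercing property satisfies
`m ≥ d·2^(d-1)·(k-2) + 2^d`. Points of `[n]^d` are modelled as functions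
`Fin d → Fin n`; a brick is a box whose side sets are intervals
`Finset.Icc a b` in `Fin n`, each nonempty and proper (`≠ univ`);
"partition" means every point lies in exactly one brick; the axis-parallel
line in direction `i` through the point `a` consists of the points agreeing
with `a` in all coordinates other than `i`. -/
theorem stmt_11 (k d n m : ℕ) (hk : 2 ≤ k) (hd : 1 ≤ d) (hn : k ≤ n)
    (B : Fin m → Fin d → Finset (Fin n))
    (hne : ∀ j i, (B j i).Nonempty)
    (hproper : ∀ j i, B j i ≠ Finset.univ)
    (hbrick : ∀ j i, ∃ a b : Fin n, B j i = Finset.Icc a b)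
    (hpart : ∀ x : Fin d → Fin n, ∃! j, ∀ i, x i ∈ B j i)
    (hpierce : ∀ i : Fin d, ∀ a : Fin d → Fin n,
      k ≤ (Finset.univ.filter (fun j : Fin m =>
        ∃ x : Fin d → Fin n,
          (∀ i' : Fin d, i' ≠ i → x i' = a i') ∧ ∀ i', x i' ∈ B j i')).card) :
    d * 2 ^ (d - 1) * (k - 2) + 2 ^ d ≤ m := by
  classical
  have hn2 : 2 ≤ n := le_trans hk hn
  set lo : Fin n := ⟨0, by omega⟩ with hlo
  set hi : Fin n := ⟨n - 1, by omega⟩ with hhi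
  -- A proper brick side cannot contain both extremes.
  have lemA : ∀ j i, lo ∈ B j i → hi ∈ B j i → False := by
    intro j i h0 h1
    obtain ⟨a, b, hab⟩ := hbrick j i
    rw [hab, Finset.mem_Icc] at h0 h1
    apply hproper j i
    rw [hab, Finset.eq_univ_iff_forall]
    intro x
    rw [Finset.mem_Icc, Fin.le_def, Fin.le_def]
    have ha := h0.1
    have hb := h1.2
    rw [Fin.le_def] at ha hb
    simp only [hlo, hhi] at ha hb
    have hx := x.isLt
    constructor <;> omega
  -- Corners with different sign at a coordinate cannot both be in a brick side.
  have cornermem : ∀ (ε ε' : Fin d → Bool) j i, ε i ≠ ε' i →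
      cnr lo hi ε i ∈ B j i → cnr lo hi ε' i ∈ B j i → False := by
    intro ε ε' j i hneq h1 h2
    cases h : ε i <;> cases h' : ε' i
    · exact hneq (h.trans h'.symm)
    · simp only [cnr, h, h', if_true, if_false] at h1 h2
      exact lemA j i h1 h2
    · simp only [cnr, h, h', if_true, if_false] at h1 h2
      exact lemA j i h2 h1
    · exact hneq (h.trans h'.symm)
  choose pick hpick huniq using hpart
  -- the set of corner bricks
  set C : Finset (Fin m) :=
    (Finset.univ : Finset (Fin d → Bool)).image (fun ε => pick (cnr lo hi ε)) with hC
  have hCinj : Function.Injective (fun ε : Fin d → Bool => pick (cnr lo hi ε)) := by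
    intro ε ε' heq
    by_contra hneq
    obtain ⟨i, hi0⟩ := Function.ne_iff.mp hneq
    have h1 : cnr lo hi ε i ∈ B (pick (cnr lo hi ε)) i := hpick _ i
    have h2 : cnr lo hi ε' i ∈ B (pick (cnr lo hi ε)) i := by
      have := hpick (cnr lo hi ε') i
      simpa [← heq] using this
    exact cornermem ε ε' _ i hi0 h1 h2
  have hCcard : C.card = 2 ^ d := by
    rw [hC, Finset.card_image_of_injective _ hCinj, Finset.card_univ]
    simp
  -- the bricks meeting the corner line in direction i through corner ε
  set F : Fin d → (Fin d → Bool) → Finset (Fin m) := fun i ε =>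
    Finset.univ.filter (fun j : Fin m =>
      ∃ x : Fin d → Fin n,
        (∀ i' : Fin d, i' ≠ i → x i' = cnr lo hi ε i') ∧ ∀ i', x i' ∈ B j i') with hFdef
  have hF : ∀ i ε, k ≤ (F i ε).card := by
    intro i ε
    simp only [hFdef]
    exact hpierce i (cnr lo hi ε)
  -- a corner brick meeting line (i, ε) is one of the two corner bricks of that line
  have lemB : ∀ (i : Fin d) (ε : Fin d → Bool), ε i = false → ∀ j, j ∈ F i ε → j ∈ C →
      j = pick (cnr lo hi ε) ∨ j = pick (cnr lo hi (Function.update ε i true)) := by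
    intro i ε hεi j hjF hjC
    rw [hC, Finset.mem_image] at hjC
    obtain ⟨ε₀, -, hε₀⟩ := hjC
    simp only [hFdef, Finset.mem_filter] at hjF
    obtain ⟨-, x, hx1, hx2⟩ := hjF
    have hagree : ∀ i' : Fin d, i' ≠ i → ε₀ i' = ε i' := by
      intro i' hi'
      by_contra hcon
      apply cornermem ε₀ ε j i' hcon
      · rw [← hε₀]; exact hpick _ i'
      · rw [← hx1 i' hi']; exact hx2 i'
    cases h0 : ε₀ i
    · left
      have hεε : ε₀ = ε := by
        funext i'
        by_cases hii : i' = i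
        · subst hii; rw [h0, hεi]
        · exact hagree i' hii
      rw [← hε₀, hεε]
    · right
      have hεε : ε₀ = Function.update ε i true := by
        funext i'
        by_cases hii : i' = i
        · subst hii; rw [h0, Function.update_self]
        · rw [Function.update_of_ne hii, hagree i' hii]
      rw [← hε₀, hεε]
  -- the non-corner bricks meeting a corner line
  set S : Fin d → (Fin d → Bool) → Finset (Fin m) := fun i ε => F i ε \ C with hSdef
  have hS : ∀ i ε, ε i = false → k - 2 ≤ (S i ε).card := by
    intro i ε hεi
    have hsub : F i ε ∩ C ⊆
        {pick (cnr lo hi ε), pick (cnr lo hi (Function.update ε i true))} := by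
      intro j hj
      rw [Finset.mem_inter] at hj
      rcases lemB i ε hεi j hj.1 hj.2 with h | h <;> simp [h]
    have h2 : (F i ε ∩ C).card ≤ 2 := by
      refine (Finset.card_le_card hsub).trans ?_
      exact (Finset.card_insert_le _ _).trans (by simp)
    have h3 : (F i ε \ C).card + (F i ε ∩ C).card = (F i ε).card :=
      Finset.card_sdiff_add_card_inter _ _
    have h4 := hF i ε
    simp only [hSdef]
    omega
  -- non-corner sets for distinct corner lines are disjoint
  have lemC : ∀ p q : Fin d × (Fin d → Bool), p.2 p.1 = false → q.2 q.1 = false →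
      p ≠ q → Disjoint (S p.1 p.2) (S q.1 q.2) := by
    rintro ⟨i, ε⟩ ⟨i', ε'⟩ hεi hε'i' hne'
    replace hεi : ε i = false := hεi
    replace hε'i' : ε' i' = false := hε'i'
    rw [Finset.disjoint_left]
    intro j hj hj'
    simp only [hSdef, Finset.mem_sdiff] at hj hj'
    have hjC : j ∉ C := hj.2
    simp only [hFdef, Finset.mem_filter] at hj hj'
    obtain ⟨⟨-, x, hx1, hx2⟩, -⟩ := hj
    obtain ⟨⟨-, y, hy1, hy2⟩, -⟩ := hj'
    by_cases hii : i = i'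
    · subst hii
      have hεε' : ε ≠ ε' := fun h => hne' (by rw [h])
      obtain ⟨i₀, h₀⟩ := Function.ne_iff.mp hεε'
      have hi₀ : i₀ ≠ i := by
        intro h
        subst h
        rw [hεi, hε'i'] at h₀
        exact h₀ rfl
      apply cornermem ε ε' j i₀ h₀
      · rw [← hx1 i₀ hi₀]; exact hx2 i₀
      · rw [← hy1 i₀ hi₀]; exact hy2 i₀
    · apply hjC
      have hmem : ∀ i₀, cnr lo hi (Function.update ε i (ε' i)) i₀ ∈ B j i₀ := by
        intro i₀
        by_cases h : i₀ = i
        · subst h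
          have heq : cnr lo hi (Function.update ε i₀ (ε' i₀)) i₀ = cnr lo hi ε' i₀ := by
            simp [cnr, Function.update_self]
          rw [heq, ← hy1 i₀ hii]
          exact hy2 i₀
        · have heq : cnr lo hi (Function.update ε i (ε' i)) i₀ = cnr lo hi ε i₀ := by
            simp [cnr, Function.update_of_ne h]
          rw [heq, ← hx1 i₀ h]
          exact hx2 i₀
      rw [hC, Finset.mem_image]
      exact ⟨_, Finset.mem_univ _, (huniq _ j hmem).symm⟩
  -- number of sign vectors with ε i = false
  have hA : ∀ i : Fin d, (Finset.univ.filter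
      fun ε : Fin d → Bool => ε i = false).card = 2 ^ (d - 1) := by
    intro i
    have h1 : (Finset.univ.filter fun ε : Fin d → Bool => ε i = false).card
        = (Finset.univ.filter fun ε : Fin d → Bool => ¬ (ε i = false)).card := by
      apply Finset.card_bij' (fun ε _ => Function.update ε i true)
          (fun ε _ => Function.update ε i false)
      · intro ε hε
        simp only [Finset.mem_filter] at hε
        funext i'
        by_cases h : i' = i
        · subst h; simp [Function.update_self, hε.2]
        · simp [Function.update_of_ne h]
      · intro ε hε
        simp only [Finset.mem_filter] at hε
        funext i'
        by_cases h : i' = i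
        · subst h
          simp only [Function.update_self]
          simp only [Bool.not_eq_false] at hε
          exact hε.2.symm
        · simp [Function.update_of_ne h]
      · intro ε hε
        simp [Function.update_self]
      · intro ε hε
        simp [Function.update_self]
    have h2 : (Finset.univ.filter fun ε : Fin d → Bool => ε i = false).card
        + (Finset.univ.filter fun ε : Fin d → Bool => ¬ (ε i = false)).card
        = Fintype.card (Fin d → Bool) := by
      rw [← Finset.card_univ]
      exact Finset.card_filter_add_card_filter_not _
    have h3 : Fintype.card (Fin d → Bool) = 2 ^ d := by simp
    have h4 : 2 ^ d = 2 ^ (d - 1) * 2 := by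
      conv_lhs => rw [← Nat.sub_add_cancel hd]
      rw [pow_succ]
    have harith : ∀ X Y T : ℕ, X = Y → X + Y = T → T = 2 ^ (d - 1) * 2 →
        X = 2 ^ (d - 1) := by
      clear h1 h2 h3
      intro X Y T
      omega
    exact harith _ _ _ h1 h2 (h3.trans h4)
  -- the index set of corner lines
  set Q : Finset (Fin d × (Fin d → Bool)) :=
    Finset.univ.filter (fun p => p.2 p.1 = false) with hQ
  have hQcard : Q.card = d * 2 ^ (d - 1) := by
    rw [hQ, Finset.card_filter, Fintype.sum_prod_type]
    have : ∀ i : Fin d,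
        (∑ ε : Fin d → Bool, if ε i = false then 1 else 0) = 2 ^ (d - 1) := by
      intro i
      rw [← Finset.card_filter]
      exact hA i
    rw [Finset.sum_congr rfl (fun i _ => this i)]
    simp [mul_comm]
  -- assemble
  have hdisjBC : Disjoint (Q.biUnion fun p => S p.1 p.2) C := by
    rw [Finset.disjoint_left]
    intro j hj
    obtain ⟨p, hp, hjp⟩ := Finset.mem_biUnion.mp hj
    simp only [hSdef, Finset.mem_sdiff] at hjp
    exact hjp.2
  have hbU : (Q.biUnion fun p => S p.1 p.2).card = ∑ p ∈ Q, (S p.1 p.2).card := by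
    apply Finset.card_biUnion
    intro p hp q hq hpq
    rw [hQ, Finset.mem_coe, Finset.mem_filter] at hp hq
    exact lemC p q hp.2 hq.2 hpq
  have hsum : Q.card * (k - 2) ≤ ∑ p ∈ Q, (S p.1 p.2).card := by
    calc Q.card * (k - 2) = ∑ _p ∈ Q, (k - 2) := by
          rw [Finset.sum_const, smul_eq_mul]
      _ ≤ ∑ p ∈ Q, (S p.1 p.2).card := by
          apply Finset.sum_le_sum
          intro p hp
          rw [hQ, Finset.mem_filter] at hp
          exact hS p.1 p.2 hp.2
  have hfin : ((Q.biUnion fun p => S p.1 p.2) ∪ C).card ≤ m := by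
    have h := Finset.card_le_univ ((Q.biUnion fun p => S p.1 p.2) ∪ C)
    simpa using h
  calc d * 2 ^ (d - 1) * (k - 2) + 2 ^ d
      = Q.card * (k - 2) + C.card := by rw [hQcard, hCcard]
    _ ≤ (∑ p ∈ Q, (S p.1 p.2).card) + C.card :=
        Nat.add_le_add_right hsum _
    _ = ((Q.biUnion fun p => S p.1 p.2) ∪ C).card := by
        rw [Finset.card_union_of_disjoint hdisjBC, hbU]
    _ ≤ m := hfin
end

section
/- Let k ≥ 2, d ≥ 1 and n ≥ k be integers. If {B^1, …, B^m} is a partition of [n]^d into proper boxes having the k-piercing property, then m ≥ d(k−1) + 1. -/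
/-- For `k ≥ 2`, `d ≥ 1` and `n ≥ k`, any partition of `[n]^d` into `m`
proper boxes with the `k`-piercing property satisfies `m ≥ d(k-1) + 1`.
Points of `[n]^d` are modelled as functions `Fin d → Fin n`; a box is given
by its side sets, each nonempty and proper (`≠ univ`); "partition" means
every point lies in exactly one box; the axis-parallel line in direction `i`
through the point `a` consists of the points agreeing with `a` in all
coordinates other than `i`. -/
theorem stmt_13 (k d n m : ℕ) (hk : 2 ≤ k) (hd : 1 ≤ d) (hn : k ≤ n)
    (B : Fin m → Fin d → Finset (Fin n))
    (hne : ∀ j i, (B j i).Nonempty)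
    (hproper : ∀ j i, B j i ≠ Finset.univ)
    (hpart : ∀ x : Fin d → Fin n, ∃! j, ∀ i, x i ∈ B j i)
    (hpierce : ∀ i : Fin d, ∀ a : Fin d → Fin n,
      k ≤ (Finset.univ.filter (fun j : Fin m =>
        ∃ x : Fin d → Fin n,
          (∀ i' : Fin d, i' ≠ i → x i' = a i') ∧ ∀ i', x i' ∈ B j i')).card) :
    d * (k - 1) + 1 ≤ m := by
  have hx0 : (0 : ℕ) < n := by omega
  set x : Fin d → Fin n := fun _ => ⟨0, hx0⟩ with hxdef
  obtain ⟨j0, hj0, huniq⟩ := hpart x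
  set S : Fin d → Finset (Fin m) := fun i =>
    Finset.univ.filter (fun j => x i ∉ B j i ∧ ∀ i', i' ≠ i → x i' ∈ B j i') with hS
  have hmemS : ∀ i j, j ∈ S i ↔ (x i ∉ B j i ∧ ∀ i', i' ≠ i → x i' ∈ B j i') := by
    intro i j; simp [hS]
  -- each S i has at least k-1 elements
  have hcard : ∀ i, k - 1 ≤ (S i).card := by
    intro i
    set T := Finset.univ.filter (fun j : Fin m =>
        ∃ y : Fin d → Fin n,
          (∀ i' : Fin d, i' ≠ i → y i' = x i') ∧ ∀ i', y i' ∈ B j i') with hT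
    have hsub : T.erase j0 ⊆ S i := by
      intro j hj
      rw [Finset.mem_erase] at hj
      obtain ⟨hjne, hj⟩ := hj
      rw [hT, Finset.mem_filter] at hj
      obtain ⟨-, y, hy1, hy2⟩ := hj
      have hx' : ∀ i', i' ≠ i → x i' ∈ B j i' := fun i' h => hy1 i' h ▸ hy2 i'
      rw [hmemS]
      refine ⟨fun hxin => hjne ?_, hx'⟩
      refine huniq j (fun i' => ?_)
      by_cases h : i' = i
      · subst h; exact hxin
      · exact hx' i' h
    have hTk : k ≤ T.card := hpierce i x
    have h1 : T.card - 1 ≤ (T.erase j0).card := Finset.pred_card_le_card_erase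
    have h2 := Finset.card_le_card hsub
    omega
  -- the S i are pairwise disjoint
  have hdisj : ∀ i ∈ Finset.univ, ∀ i' ∈ Finset.univ, i ≠ i' → Disjoint (S i) (S i') := by
    intro i _ i' _ hne'
    rw [Finset.disjoint_left]
    intro j hji hji'
    rw [hmemS] at hji hji'
    exact hji.1 (hji'.2 i hne')
  have hj0not : j0 ∉ Finset.univ.biUnion S := by
    rw [Finset.mem_biUnion]
    rintro ⟨i, -, hi⟩
    rw [hmemS] at hi
    exact hi.1 (hj0 i)
  have hbig : d * (k - 1) + 1 ≤ (insert j0 (Finset.univ.biUnion S)).card := by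
    rw [Finset.card_insert_of_notMem hj0not, Finset.card_biUnion hdisj]
    have := Finset.card_nsmul_le_sum Finset.univ (fun i => (S i).card) (k - 1)
      (fun i _ => hcard i)
    simp only [Finset.card_univ, Fintype.card_fin, smul_eq_mul] at this
    omega
  calc d * (k - 1) + 1 ≤ (insert j0 (Finset.univ.biUnion S)).card := hbig
    _ ≤ Finset.univ.card := Finset.card_le_univ _
    _ = m := by simp
end

section
/- Let k ≥ 2 and d ≥ 1 be integers. There exists an integer n_0 such that for every n ≥ n_0 there is a partition {B^1, …, B^m} of [n]^d into proper bricks having the k-piercing property with m ≤ 4^d · k. -/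
lemma brick_aux (k d : ℕ) (hk : 2 ≤ k) :
    ∀ s : ℕ, ∀ S : Finset (Fin d), S.card = s → S.Nonempty →
    ∀ lo hi : Fin d → ℕ, (∀ i, lo i ≤ hi i) →
    (∀ i ∈ S, 2 ^ (s - 1) * k ≤ hi i + 1 - lo i) →
    ∃ F : Finset ((Fin d → ℕ) × (Fin d → ℕ)),
      F.card ≤ 4 ^ (s - 1) * k ∧
      (∀ p ∈ F, ∀ i, p.1 i ≤ p.2 i) ∧
      (∀ p ∈ F, ∀ i, lo i ≤ p.1 i ∧ p.2 i ≤ hi i) ∧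
      (∀ p ∈ F, ∀ i ∈ S, p.1 i ≠ lo i ∨ p.2 i ≠ hi i) ∧
      (∀ p ∈ F, ∀ i, i ∉ S → p.1 i = lo i ∧ p.2 i = hi i) ∧
      (∀ x : Fin d → ℕ, (∀ i, lo i ≤ x i ∧ x i ≤ hi i) →
        ∃! p, p ∈ F ∧ ∀ i, p.1 i ≤ x i ∧ x i ≤ p.2 i) ∧
      (∀ i ∈ S, ∀ pt : Fin d → ℕ, (∀ i', lo i' ≤ pt i' ∧ pt i' ≤ hi i') →
        k ≤ (F.filter (fun p => ∀ i', i' ≠ i → p.1 i' ≤ pt i' ∧ pt i' ≤ p.2 i')).card) := by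
  intro s
  induction s with
  | zero =>
      intro S hS hne
      exact absurd hne (by simp [Finset.card_eq_zero.mp hS])
  | succ s ih =>
      simp only [Nat.add_sub_cancel]
      rcases Nat.eq_zero_or_pos s with rfl | hs1
      · -- base case : |S| = 1
        intro S hS hne lo hi hle hsz
        simp only [pow_zero, one_mul]
        obtain ⟨a, rfl⟩ := Finset.card_eq_one.mp hS
        have hsa : k ≤ hi a + 1 - lo a := by
          have := hsz a (Finset.mem_singleton_self a); simpa using this
        have hka : lo a + (k - 1) ≤ hi a := by have := hle a; omega
        set f : ℕ → (Fin d → ℕ) × (Fin d → ℕ) := fun t =>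
          (Function.update lo a (lo a + t),
           Function.update hi a (if t + 1 = k then hi a else lo a + t)) with hf
        have hinj : Set.InjOn f (Finset.range k) := by
          intro t _ t' _ h
          have h1 := congrFun (congrArg Prod.fst h) a
          have h2 : lo a + t = lo a + t' := by
            simpa [hf, Function.update_self] using h1
          omega
        refine ⟨(Finset.range k).image f, ?_, ?_, ?_, ?_, ?_, ?_, ?_⟩
        · rw [Finset.card_image_of_injOn hinj, Finset.card_range]
        · rintro p hp i
          obtain ⟨t, ht, rfl⟩ := Finset.mem_image.mp hp
          rw [Finset.mem_range] at ht
          by_cases hia : i = a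
          · subst hia
            simp only [hf, Function.update_self]
            split_ifs with h <;> omega
          · simp only [hf, Function.update_of_ne hia]
            exact hle i
        · rintro p hp i
          obtain ⟨t, ht, rfl⟩ := Finset.mem_image.mp hp
          rw [Finset.mem_range] at ht
          by_cases hia : i = a
          · subst hia
            simp only [hf, Function.update_self]
            constructor
            · omega
            · split_ifs with h <;> omega
          · simp only [hf, Function.update_of_ne hia]
            exact ⟨le_refl _, le_refl _⟩
        · rintro p hp i hiS
          obtain ⟨t, ht, rfl⟩ := Finset.mem_image.mp hp
          rw [Finset.mem_range] at ht
          rw [Finset.mem_singleton] at hiS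
          subst hiS
          simp only [hf, Function.update_self]
          by_cases ht0 : t = 0
          · subst ht0
            right
            rw [if_neg (by omega)]
            omega
          · left; omega
        · rintro p hp i hiS
          obtain ⟨t, ht, rfl⟩ := Finset.mem_image.mp hp
          rw [Finset.mem_singleton] at hiS
          exact ⟨by simp [hf, Function.update_of_ne hiS],
            by simp [hf, Function.update_of_ne hiS]⟩
        · intro x hx
          have hxa1 := (hx a).1
          have hxa2 := (hx a).2
          refine ⟨f (min (x a - lo a) (k - 1)),
            ⟨Finset.mem_image_of_mem f (Finset.mem_range.mpr (by omega)), ?_⟩, ?_⟩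
          · intro i
            by_cases hia : i = a
            · subst hia
              constructor
              · simp only [hf, Function.update_self]; omega
              · simp only [hf, Function.update_self]
                split_ifs with h <;> omega
            · simp only [hf, Function.update_of_ne hia]
              exact hx i
          · rintro p ⟨hp, hpx⟩
            obtain ⟨t, ht, rfl⟩ := Finset.mem_image.mp hp
            rw [Finset.mem_range] at ht
            have h1 := (hpx a).1
            have h2 := (hpx a).2
            simp only [hf, Function.update_self] at h1 h2
            have htt : t = min (x a - lo a) (k - 1) := by
              split_ifs at h2 with h <;> omega
            rw [htt]
        · intro i hiS pt hpt
          rw [Finset.mem_singleton] at hiS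
          subst hiS
          have heq : ((Finset.range k).image f).filter
              (fun p => ∀ i', i' ≠ i → p.1 i' ≤ pt i' ∧ pt i' ≤ p.2 i')
              = (Finset.range k).image f := by
            apply Finset.filter_true_of_mem
            rintro p hp i' hi'
            obtain ⟨t, ht, rfl⟩ := Finset.mem_image.mp hp
            simp only [hf, Function.update_of_ne hi']
            exact hpt i'
          rw [heq, Finset.card_image_of_injOn hinj, Finset.card_range]
      · -- inductive step : |S| ≥ 2
        obtain ⟨e, rfl⟩ : ∃ e, s = e + 1 := ⟨s - 1, by omega⟩
        simp only [Nat.add_sub_cancel] at ih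
        intro S hS hne lo hi hle hsz
        obtain ⟨a, haS, b, hbS, hab⟩ := Finset.one_lt_card.mp (by omega : 1 < S.card)
        have hba : b ≠ a := Ne.symm hab
        set P := 2 ^ e * k with hP
        have hPpos : 0 < P := by rw [hP]; positivity
        have h2P : 2 ^ (e + 1) * k = 2 * P := by rw [hP, pow_succ]; ring
        have h4P : 4 ^ (e + 1) * k = 4 * (4 ^ e * k) := by rw [pow_succ]; ring
        set Ha := (hi a + 1 - lo a) / 2 with hHa
        set Hb := (hi b + 1 - lo b) / 2 with hHb
        have hLa : 2 * P ≤ hi a + 1 - lo a := by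
          have := hsz a haS; omega
        have hLb : 2 * P ≤ hi b + 1 - lo b := by
          have := hsz b hbS; omega
        have hlea := hle a
        have hleb := hle b
        have hHa1 : P ≤ Ha := by omega
        have hHb1 : P ≤ Hb := by omega
        have hHa2 : lo a + Ha ≤ hi a := by omega
        have hHb2 : lo b + Hb ≤ hi b := by omega
        set lo' : Bool → Bool → Fin d → ℕ := fun p q =>
          Function.update (Function.update lo a (cond p (lo a + Ha) (lo a))) b
            (cond q (lo b + Hb) (lo b)) with hlo'
        set hi' : Bool → Bool → Fin d → ℕ := fun p q =>
          Function.update (Function.update hi a (cond p (hi a) (lo a + (Ha - 1)))) b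
            (cond q (hi b) (lo b + (Hb - 1))) with hhi'
        have hlo'a : ∀ p q, lo' p q a = cond p (lo a + Ha) (lo a) := by
          intro p q
          simp [hlo', Function.update_of_ne hab, Function.update_self]
        have hlo'b : ∀ p q, lo' p q b = cond q (lo b + Hb) (lo b) := by
          intro p q
          simp [hlo', Function.update_self]
        have hlo'o : ∀ p q i, i ≠ a → i ≠ b → lo' p q i = lo i := by
          intro p q i h1 h2
          simp [hlo', Function.update_of_ne h1, Function.update_of_ne h2]
        have hhi'a : ∀ p q, hi' p q a = cond p (hi a) (lo a + (Ha - 1)) := by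
          intro p q
          simp [hhi', Function.update_of_ne hab, Function.update_self]
        have hhi'b : ∀ p q, hi' p q b = cond q (hi b) (lo b + (Hb - 1)) := by
          intro p q
          simp [hhi', Function.update_self]
        have hhi'o : ∀ p q i, i ≠ a → i ≠ b → hi' p q i = hi i := by
          intro p q i h1 h2
          simp [hhi', Function.update_of_ne h1, Function.update_of_ne h2]
        set S' : Bool → Bool → Finset (Fin d) := fun (p q : Bool) => S.erase (cond p (cond q a b) (cond q b a))
          with hS'
        have hS'mem : ∀ p q, (cond p (cond q a b) (cond q b a)) ∈ S := by
          intro p q; cases p <;> cases q <;> simp [haS, hbS]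
        have hS'iff : ∀ (p q : Bool) (i : Fin d),
            i ∈ S' p q ↔ (i ≠ cond p (cond q a b) (cond q b a) ∧ i ∈ S) := by
          intro p q i
          simp only [hS', Finset.mem_erase]
        have key : ∀ p q : Bool,
            ∃ F : Finset ((Fin d → ℕ) × (Fin d → ℕ)),
              F.card ≤ 4 ^ e * k ∧
              (∀ br ∈ F, ∀ i, br.1 i ≤ br.2 i) ∧
              (∀ br ∈ F, ∀ i, lo' p q i ≤ br.1 i ∧ br.2 i ≤ hi' p q i) ∧
              (∀ br ∈ F, ∀ i ∈ S' p q, br.1 i ≠ lo' p q i ∨ br.2 i ≠ hi' p q i) ∧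
              (∀ br ∈ F, ∀ i, i ∉ S' p q → br.1 i = lo' p q i ∧ br.2 i = hi' p q i) ∧
              (∀ x : Fin d → ℕ, (∀ i, lo' p q i ≤ x i ∧ x i ≤ hi' p q i) →
                ∃! br, br ∈ F ∧ ∀ i, br.1 i ≤ x i ∧ x i ≤ br.2 i) ∧
              (∀ i ∈ S' p q, ∀ pt : Fin d → ℕ,
                (∀ i', lo' p q i' ≤ pt i' ∧ pt i' ≤ hi' p q i') →
                k ≤ ((F.filter (fun br => ∀ i', i' ≠ i →
                      br.1 i' ≤ pt i' ∧ pt i' ≤ br.2 i')).card)) := by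
          intro p q
          have hcard' : (S' p q).card = e + 1 := by
            simp only [hS']
            rw [Finset.card_erase_of_mem (hS'mem p q), hS]
            omega
          apply ih (S' p q) hcard'
          · apply Finset.card_pos.mp
            rw [hcard']
            omega
          · intro i
            by_cases hib : i = b
            · subst hib
              rw [hlo'b, hhi'b]
              cases q <;> simp <;> omega
            · by_cases hia : i = a
              · subst hia
                rw [hlo'a, hhi'a]
                cases p <;> simp <;> omega
              · rw [hlo'o p q i hia hib, hhi'o p q i hia hib]
                exact hle i
          · intro i hiS'
            have hiS : i ∈ S := ((hS'iff p q i).mp hiS').2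
            by_cases hib : i = b
            · subst hib
              rw [hlo'b, hhi'b]
              cases q <;> simp <;> omega
            · by_cases hia : i = a
              · subst hia
                rw [hlo'a, hhi'a]
                cases p <;> simp <;> omega
              · rw [hlo'o p q i hia hib, hhi'o p q i hia hib]
                have := hsz i hiS
                omega
        choose F h1 h2 h3 h4 h5 h6 h7 using key
        set FF := F true true ∪ F true false ∪ F false true ∪ F false false with hFF
        have hsub : ∀ p q, F p q ⊆ FF := by
          intro p q
          cases p <;> cases q <;> intro x hx <;>
            simp only [hFF, Finset.mem_union] <;> tauto
        have hFFmem : ∀ br, br ∈ FF ↔ ∃ p q, br ∈ F p q := by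
          intro br
          constructor
          · intro h
            simp only [hFF, Finset.mem_union] at h
            rcases h with ((h | h) | h) | h
            exacts [⟨true, true, h⟩, ⟨true, false, h⟩, ⟨false, true, h⟩,
              ⟨false, false, h⟩]
          · rintro ⟨p, q, h⟩
            exact hsub p q h
        have hquadPt : ∀ (p q : Bool) (x : Fin d → ℕ),
            (∀ i, lo' p q i ≤ x i ∧ x i ≤ hi' p q i) →
            (p = true ↔ lo a + Ha ≤ x a) ∧ (q = true ↔ lo b + Hb ≤ x b) := by
          intro p q x hq
          have h1 := (hq a).1
          have h2 := (hq a).2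
          have h3' := (hq b).1
          have h4' := (hq b).2
          rw [hlo'a] at h1
          rw [hhi'a] at h2
          rw [hlo'b] at h3'
          rw [hhi'b] at h4'
          constructor
          · cases p <;> simp only [Bool.cond_true, Bool.cond_false] at h1 h2 <;>
              simp <;> omega
          · cases q <;> simp only [Bool.cond_true, Bool.cond_false] at h3' h4' <;>
              simp <;> omega
        have hmkbox : ∀ (p q : Bool) (x : Fin d → ℕ),
            (∀ i, lo i ≤ x i ∧ x i ≤ hi i) →
            (cond p (lo a + Ha ≤ x a) (x a ≤ lo a + (Ha - 1))) →
            (cond q (lo b + Hb ≤ x b) (x b ≤ lo b + (Hb - 1))) →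
            ∀ i, lo' p q i ≤ x i ∧ x i ≤ hi' p q i := by
          intro p q x hx hpa hpb i
          by_cases hib : i = b
          · subst hib
            rw [hlo'b, hhi'b]
            have := hx i
            cases q <;> simp only [Bool.cond_true, Bool.cond_false] at hpb ⊢ <;>
              constructor <;> omega
          · by_cases hia : i = a
            · subst hia
              rw [hlo'a, hhi'a]
              have := hx i
              cases p <;> simp only [Bool.cond_true, Bool.cond_false] at hpa ⊢ <;>
                constructor <;> omega
            · rw [hlo'o p q i hia hib, hhi'o p q i hia hib]
              exact hx i
        refine ⟨FF, ?_, ?_, ?_, ?_, ?_, ?_, ?_⟩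
        · -- cardinality
          have c1 := Finset.card_union_le (F true true ∪ F true false ∪ F false true)
            (F false false)
          have c2 := Finset.card_union_le (F true true ∪ F true false) (F false true)
          have c3 := Finset.card_union_le (F true true) (F true false)
          have b1 := h1 true true
          have b2 := h1 true false
          have b3 := h1 false true
          have b4 := h1 false false
          rw [hFF, h4P]
          omega
        · -- lo ≤ hi within bricks
          intro br hbr i
          obtain ⟨p, q, hpq⟩ := (hFFmem br).mp hbr
          exact h2 p q br hpq i
        · -- bricks inside the big box
          intro br hbr i
          obtain ⟨p, q, hpq⟩ := (hFFmem br).mp hbr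
          have hb := h3 p q br hpq i
          by_cases hib : i = b
          · subst hib
            rw [hlo'b, hhi'b] at hb
            cases q <;> simp only [Bool.cond_true, Bool.cond_false] at hb <;>
              constructor <;> omega
          · by_cases hia : i = a
            · subst hia
              rw [hlo'a, hhi'a] at hb
              cases p <;> simp only [Bool.cond_true, Bool.cond_false] at hb <;>
                constructor <;> omega
            · rw [hlo'o p q i hia hib, hhi'o p q i hia hib] at hb
              exact hb
        · -- properness
          intro br hbr i hiS
          obtain ⟨p, q, hpq⟩ := (hFFmem br).mp hbr
          by_cases hia : i = a
          · subst hia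
            have hb := h3 p q br hpq i
            rw [hlo'a, hhi'a] at hb
            cases p
            · right
              simp only [Bool.cond_false] at hb
              omega
            · left
              simp only [Bool.cond_true] at hb
              omega
          · by_cases hib : i = b
            · subst hib
              have hb := h3 p q br hpq i
              rw [hlo'b, hhi'b] at hb
              cases q
              · right
                simp only [Bool.cond_false] at hb
                omega
              · left
                simp only [Bool.cond_true] at hb
                omega
            · have hiS' : i ∈ S' p q := by
                refine (hS'iff p q i).mpr ⟨?_, hiS⟩
                cases p <;> cases q <;> first | exact hia | exact hib
              have h := h4 p q br hpq i hiS'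
              rw [hlo'o p q i hia hib, hhi'o p q i hia hib] at h
              exact h
        · -- outside S nothing changes
          intro br hbr i hiS
          obtain ⟨p, q, hpq⟩ := (hFFmem br).mp hbr
          have hia : i ≠ a := fun h => hiS (h ▸ haS)
          have hib : i ≠ b := fun h => hiS (h ▸ hbS)
          have hiS' : i ∉ S' p q := fun h => hiS ((hS'iff p q i).mp h).2
          have h := h5 p q br hpq i hiS'
          rw [hlo'o p q i hia hib, hhi'o p q i hia hib] at h
          exact h
        · -- partition
          intro x hx
          have exuniq : ∀ (p q : Bool),
              (∀ i, lo' p q i ≤ x i ∧ x i ≤ hi' p q i) →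
              ∃! br, br ∈ FF ∧ ∀ i, br.1 i ≤ x i ∧ x i ≤ br.2 i := by
            intro p q hxq
            obtain ⟨br, ⟨hbrF, hbrx⟩, huq⟩ := h6 p q x hxq
            refine ⟨br, ⟨hsub p q hbrF, hbrx⟩, ?_⟩
            rintro br' ⟨hbr'FF, hbr'x⟩
            obtain ⟨p', q', hbr'⟩ := (hFFmem br').mp hbr'FF
            have hxq' : ∀ i, lo' p' q' i ≤ x i ∧ x i ≤ hi' p' q' i := fun i =>
              ⟨(h3 p' q' br' hbr' i).1.trans (hbr'x i).1,
               (hbr'x i).2.trans (h3 p' q' br' hbr' i).2⟩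
            have hdet := hquadPt p' q' x hxq'
            have hdet2 := hquadPt p q x hxq
            have hp : p' = p := Bool.eq_iff_iff.mpr (hdet.1.trans hdet2.1.symm)
            have hq : q' = q := Bool.eq_iff_iff.mpr (hdet.2.trans hdet2.2.symm)
            subst hp
            subst hq
            exact huq br' ⟨hbr', hbr'x⟩
          by_cases hca : lo a + Ha ≤ x a <;> by_cases hcb : lo b + Hb ≤ x b
          · exact exuniq true true (hmkbox true true x hx hca hcb)
          · exact exuniq true false (hmkbox true false x hx hca
              (show x b ≤ lo b + (Hb - 1) by omega))
          · exact exuniq false true (hmkbox false true x hx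
              (show x a ≤ lo a + (Ha - 1) by omega) hcb)
          · exact exuniq false false (hmkbox false false x hx
              (show x a ≤ lo a + (Ha - 1) by omega)
              (show x b ≤ lo b + (Hb - 1) by omega))
        · -- piercing
          intro i hiS pt hpt
          have hpier : ∀ (p q : Bool), i ∈ S' p q →
              ∀ pt' : Fin d → ℕ, (∀ i', lo' p q i' ≤ pt' i' ∧ pt' i' ≤ hi' p q i') →
              (∀ i', i' ≠ i → pt i' = pt' i') →
              k ≤ (FF.filter (fun br => ∀ i', i' ≠ i →
                    br.1 i' ≤ pt i' ∧ pt i' ≤ br.2 i')).card := by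
            intro p q hiS' pt' hpt' hagree
            refine le_trans (h7 p q i hiS' pt' hpt') (Finset.card_le_card ?_)
            intro br hbr
            rw [Finset.mem_filter] at hbr ⊢
            refine ⟨hsub p q hbr.1, fun i' hi' => ?_⟩
            rw [hagree i' hi']
            exact hbr.2 i' hi'
          by_cases hia : i = a
          · subst hia
            by_cases hcb : lo b + Hb ≤ pt b
            · -- q = true, p = false
              have hiS' : i ∈ S' false true := (hS'iff false true i).mpr ⟨hab, haS⟩
              refine hpier false true hiS' (Function.update pt i (lo i)) ?_
                (fun i' hi' => (Function.update_of_ne hi' _ _).symm)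
              intro i'
              by_cases hib : i' = b
              · subst hib
                rw [hlo'b, hhi'b, Function.update_of_ne hba]
                simp only [Bool.cond_true]
                exact ⟨hcb, (hpt i').2⟩
              · by_cases hia' : i' = i
                · subst hia'
                  rw [hlo'a, hhi'a, Function.update_self]
                  simp only [Bool.cond_false]
                  omega
                · rw [hlo'o _ _ i' hia' hib, hhi'o _ _ i' hia' hib,
                    Function.update_of_ne hia']
                  exact hpt i'
            · -- q = false, p = true
              have hiS' : i ∈ S' true false := (hS'iff true false i).mpr ⟨hab, haS⟩
              refine hpier true false hiS' (Function.update pt i (lo i + Ha)) ?_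
                (fun i' hi' => (Function.update_of_ne hi' _ _).symm)
              intro i'
              by_cases hib : i' = b
              · subst hib
                rw [hlo'b, hhi'b, Function.update_of_ne hba]
                simp only [Bool.cond_false]
                have := hpt i'
                omega
              · by_cases hia' : i' = i
                · subst hia'
                  rw [hlo'a, hhi'a, Function.update_self]
                  simp only [Bool.cond_true]
                  omega
                · rw [hlo'o _ _ i' hia' hib, hhi'o _ _ i' hia' hib,
                    Function.update_of_ne hia']
                  exact hpt i'
          · by_cases hib : i = b
            · subst hib
              -- p = q, erased element is a
              by_cases hca : lo a + Ha ≤ pt a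
              · have hiS' : i ∈ S' true true := (hS'iff true true i).mpr ⟨hba, hbS⟩
                refine hpier true true hiS' (Function.update pt i (lo i + Hb)) ?_
                  (fun i' hi' => (Function.update_of_ne hi' _ _).symm)
                intro i'
                by_cases hib' : i' = i
                · subst hib'
                  rw [hlo'b, hhi'b, Function.update_self]
                  simp only [Bool.cond_true]
                  omega
                · by_cases hia' : i' = a
                  · subst hia'
                    rw [hlo'a, hhi'a, Function.update_of_ne hab]
                    simp only [Bool.cond_true]
                    exact ⟨hca, (hpt i').2⟩
                  · rw [hlo'o _ _ i' hia' hib', hhi'o _ _ i' hia' hib',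
                      Function.update_of_ne hib']
                    exact hpt i'
              · have hiS' : i ∈ S' false false := (hS'iff false false i).mpr ⟨hba, hbS⟩
                refine hpier false false hiS' (Function.update pt i (lo i)) ?_
                  (fun i' hi' => (Function.update_of_ne hi' _ _).symm)
                intro i'
                by_cases hib' : i' = i
                · subst hib'
                  rw [hlo'b, hhi'b, Function.update_self]
                  simp only [Bool.cond_false]
                  omega
                · by_cases hia' : i' = a
                  · subst hia'
                    rw [hlo'a, hhi'a, Function.update_of_ne hab]
                    simp only [Bool.cond_false]
                    have := hpt i'
                    omega
                  · rw [hlo'o _ _ i' hia' hib', hhi'o _ _ i' hia' hib',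
                      Function.update_of_ne hib']
                    exact hpt i'
            · -- i is neither a nor b
              have hmema : ∀ p q : Bool, (cond p (cond q a b) (cond q b a)) ≠ i := by
                intro p q
                cases p <;> cases q <;> simp [Ne.symm hia, Ne.symm hib]
              by_cases hca : lo a + Ha ≤ pt a <;> by_cases hcb : lo b + Hb ≤ pt b
              · exact hpier true true
                  ((hS'iff true true i).mpr ⟨fun h => (hmema true true) h.symm, hiS⟩) pt
                  (hmkbox true true pt hpt hca hcb)
                  (fun _ _ => rfl)
              · exact hpier true false
                  ((hS'iff true false i).mpr ⟨fun h => (hmema true false) h.symm, hiS⟩) pt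
                  (hmkbox true false pt hpt hca
                    (show pt b ≤ lo b + (Hb - 1) by omega))
                  (fun _ _ => rfl)
              · exact hpier false true
                  ((hS'iff false true i).mpr ⟨fun h => (hmema false true) h.symm, hiS⟩) pt
                  (hmkbox false true pt hpt
                    (show pt a ≤ lo a + (Ha - 1) by omega) hcb)
                  (fun _ _ => rfl)
              · exact hpier false false
                  ((hS'iff false false i).mpr ⟨fun h => (hmema false false) h.symm, hiS⟩) pt
                  (hmkbox false false pt hpt
                    (show pt a ≤ lo a + (Ha - 1) by omega)
                    (show pt b ≤ lo b + (Hb - 1) by omega))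
                  (fun _ _ => rfl)

/-- For `k ≥ 2` and `d ≥ 1` there is `n₀` such that every `[n]^d` with
`n ≥ n₀` admits a partition into `m ≤ 4^d · k` proper bricks with the
`k`-piercing property. Points of `[n]^d` are modelled as functions
`Fin d → Fin n`; a brick is a box whose side sets are intervals
`Finset.Icc a b` in `Fin n`, each nonempty and proper (`≠ univ`);
"partition" means every point lies in exactly one brick; the axis-parallel
line in direction `i` through the point `a` consists of the points agreeing
with `a` in all coordinates other than `i`. -/
theorem stmt_14 (k d : ℕ) (hk : 2 ≤ k) (hd : 1 ≤ d) :
    ∃ n₀ : ℕ, ∀ n : ℕ, n₀ ≤ n →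
      ∃ m : ℕ, ∃ B : Fin m → Fin d → Finset (Fin n),
        (∀ j i, (B j i).Nonempty) ∧
        (∀ j i, B j i ≠ Finset.univ) ∧
        (∀ j i, ∃ a b : Fin n, B j i = Finset.Icc a b) ∧
        (∀ x : Fin d → Fin n, ∃! j, ∀ i, x i ∈ B j i) ∧
        (∀ i : Fin d, ∀ a : Fin d → Fin n,
          k ≤ (Finset.univ.filter (fun j : Fin m =>
            ∃ x : Fin d → Fin n,
              (∀ i' : Fin d, i' ≠ i → x i' = a i') ∧ ∀ i', x i' ∈ B j i')).card) ∧
        m ≤ 4 ^ d * k := by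
  refine ⟨2 ^ d * k, ?_⟩
  intro n hn
  have h2d : 2 ≤ 2 ^ d := by
    calc 2 = 2 ^ 1 := (pow_one 2).symm
    _ ≤ 2 ^ d := Nat.pow_le_pow_right (by norm_num) hd
  have h4n : 4 ≤ n := le_trans (Nat.mul_le_mul h2d hk) hn
  have hnpos : 0 < n := by omega
  have hdn : 2 ^ (d - 1) * k ≤ n := by
    refine le_trans ?_ hn
    exact Nat.mul_le_mul_right k (Nat.pow_le_pow_right (by norm_num) (by omega))
  have hne : (Finset.univ : Finset (Fin d)).Nonempty := ⟨⟨0, hd⟩, Finset.mem_univ _⟩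
  obtain ⟨F, hc, h2, h3, h4, h5, h6, h7⟩ := brick_aux k d hk d Finset.univ (by simp) hne
    (fun _ => 0) (fun _ => n - 1)
    (fun i => show (0 : ℕ) ≤ n - 1 by omega)
    (fun i _ => show 2 ^ (d - 1) * k ≤ (n - 1) + 1 - 0 by omega)
  have hbd : ∀ p ∈ F, ∀ i : Fin d, p.1 i ≤ n - 1 ∧ p.2 i ≤ n - 1 := by
    intro p hp i
    have hA := (h3 p hp i).2
    have hB := h2 p hp i
    omega
  set E := F.equivFin with hE
  set toF : ℕ → Fin n := fun v => ⟨min v (n - 1), by omega⟩ with htoF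
  have htoFval : ∀ v, v ≤ n - 1 → (toF v : ℕ) = v := by
    intro v hv
    simp only [htoF]
    omega
  set B : Fin F.card → Fin d → Finset (Fin n) := fun j i =>
    Finset.Icc (toF ((E.symm j).1.1 i)) (toF ((E.symm j).1.2 i)) with hB
  have hmemB : ∀ (j : Fin F.card) (i : Fin d) (y : Fin n),
      y ∈ B j i ↔ ((E.symm j).1.1 i ≤ (y : ℕ) ∧ (y : ℕ) ≤ (E.symm j).1.2 i) := by
    intro j i y
    have hb := hbd (E.symm j).1 (E.symm j).2 i
    simp only [hB]
    rw [Finset.mem_Icc, Fin.le_def, Fin.le_def, htoFval _ hb.1, htoFval _ hb.2]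
  refine ⟨F.card, B, ?_, ?_, ?_, ?_, ?_, ?_⟩
  · -- nonempty
    intro j i
    have hb := hbd (E.symm j).1 (E.symm j).2 i
    refine ⟨toF ((E.symm j).1.1 i), (hmemB j i _).mpr ⟨?_, ?_⟩⟩
    · rw [htoFval _ hb.1]
    · rw [htoFval _ hb.1]
      exact h2 (E.symm j).1 (E.symm j).2 i
  · -- proper
    intro j i h
    have h0 := (hmemB j i ⟨0, hnpos⟩).mp (by rw [h]; exact Finset.mem_univ _)
    have h1 := (hmemB j i ⟨n - 1, by omega⟩).mp (by rw [h]; exact Finset.mem_univ _)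
    have hA : (E.symm j).1.1 i = 0 := by
      have hz : (E.symm j).1.1 i ≤ ((⟨0, hnpos⟩ : Fin n) : ℕ) := h0.1
      simpa using hz
    have hBB : (E.symm j).1.2 i = n - 1 := by
      have hz : ((⟨n - 1, by omega⟩ : Fin n) : ℕ) ≤ (E.symm j).1.2 i := h1.2
      have hb := hbd (E.symm j).1 (E.symm j).2 i
      simp only [] at hz
      omega
    rcases h4 (E.symm j).1 (E.symm j).2 i (Finset.mem_univ i) with h' | h'
    · exact h' hA
    · exact h' hBB
  · -- Icc shape
    intro j i
    refine ⟨toF ((E.symm j).1.1 i), toF ((E.symm j).1.2 i), ?_⟩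
    simp only [hB]
  · -- partition
    intro x
    obtain ⟨p, ⟨hpF, hpx⟩, hu⟩ := h6 (fun i => (x i : ℕ))
      (fun i => ⟨Nat.zero_le _, show ((x i : ℕ) ≤ n - 1) by have := (x i).isLt; omega⟩)
    refine ⟨E ⟨p, hpF⟩, ?_, ?_⟩
    · intro i
      refine (hmemB _ _ _).mpr ?_
      rw [Equiv.symm_apply_apply]
      exact hpx i
    · intro j' hj'
      have hp' := (E.symm j').2
      have hx' : ∀ i : Fin d, (E.symm j').1.1 i ≤ (x i : ℕ) ∧
          (x i : ℕ) ≤ (E.symm j').1.2 i := fun i => (hmemB j' i (x i)).mp (hj' i)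
      have hpp : (E.symm j').1 = p := hu (E.symm j').1 ⟨hp', hx'⟩
      have hEE : E.symm j' = ⟨p, hpF⟩ := Subtype.ext hpp
      calc j' = E (E.symm j') := (Equiv.apply_symm_apply E j').symm
      _ = E ⟨p, hpF⟩ := by rw [hEE]
  · -- piercing
    intro i apt
    have hh := h7 i (Finset.mem_univ i) (fun i' => (apt i' : ℕ))
      (fun i' => ⟨Nat.zero_le _,
        show ((apt i' : ℕ) ≤ n - 1) by have := (apt i').isLt; omega⟩)
    have hm : 0 < F.card := by
      have h1 : k ≤ F.card := le_trans hh (Finset.card_filter_le _ _)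
      omega
    refine le_trans hh (Finset.card_le_card_of_injOn
      (fun p => if hp : p ∈ F then E ⟨p, hp⟩ else ⟨0, hm⟩) ?_ ?_)
    · intro p hp
      rw [Finset.mem_coe, Finset.mem_filter] at hp
      obtain ⟨hpF, hcond⟩ := hp
      simp only [Finset.mem_coe, Finset.mem_filter, Finset.mem_univ, true_and]
      rw [dif_pos hpF]
      refine ⟨Function.update apt i (toF (p.1 i)),
        fun i' hi' => Function.update_of_ne hi' _ _, ?_⟩
      intro i'
      refine (hmemB _ _ _).mpr ?_
      rw [Equiv.symm_apply_apply]
      by_cases hii : i' = i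
      · subst hii
        rw [Function.update_self, htoFval _ (hbd p hpF i').1]
        exact ⟨le_refl _, h2 p hpF i'⟩
      · rw [Function.update_of_ne hii]
        exact hcond i' hii
    · intro p hp q hq heq
      rw [Finset.mem_coe, Finset.mem_filter] at hp hq
      simp only [dif_pos hp.1, dif_pos hq.1] at heq
      have hsq := E.injective heq
      exact congrArg Subtype.val hsq
  · -- count
    calc F.card ≤ 4 ^ (d - 1) * k := hc
    _ ≤ 4 ^ d * k := Nat.mul_le_mul_right k (Nat.pow_le_pow_right (by norm_num) (by omega))
end

section
/- Let k ≥ 2 be an integer and let n ≥ 2(k−1) be an integer. Then there exists a partition of [n]^2 into exactly 4(k−1) proper bricks having the k-piercing property. -/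
set_option maxHeartbeats 1000000

/-- lower endpoints of the brick intervals (ℕ-level). `j < 4m` is the brick
index, `i` the coordinate. Quadrant `q = j / m` in spirit. -/
def brLo (m j i : ℕ) : ℕ :=
  if j < m then (if i = 0 then 0 else j)
  else if j < 2*m then (if i = 0 then j - m else m)
  else if j < 3*m then (if i = 0 then j - m else 0)
  else (if i = 0 then m else j - 2*m)

def brHi (m n j i : ℕ) : ℕ :=
  if j < m then (if i = 0 then m - 1 else j)
  else if j < 2*m then (if i = 0 then j - m else n - 1)
  else if j < 3*m then (if i = 0 then (if j + 1 = 3*m then n - 1 else j - m) else m - 1)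
  else (if i = 0 then n - 1 else (if j + 1 = 4*m then n - 1 else j - 2*m))

lemma brBounds (m n j i : ℕ) (hm : 1 ≤ m) (hn : 2*m ≤ n) (hj : j < 4*m) :
    brLo m j i ≤ brHi m n j i ∧ brHi m n j i ≤ n - 1 := by
  unfold brLo brHi; split_ifs <;> first | exact ‹False›.elim | omega

lemma brProper (m n j i : ℕ) (hm : 1 ≤ m) (hn : 2*m ≤ n) (hj : j < 4*m) :
    0 < brLo m j i ∨ brHi m n j i < n - 1 := by
  unfold brLo brHi; split_ifs <;> first | exact ‹False›.elim | omega

lemma brUnique (m n j j' x0 x1 : ℕ) (hm : 1 ≤ m) (hn : 2*m ≤ n)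
    (hj : j < 4*m) (hj' : j' < 4*m)
    (h0 : brLo m j 0 ≤ x0 ∧ x0 ≤ brHi m n j 0)
    (h1 : brLo m j 1 ≤ x1 ∧ x1 ≤ brHi m n j 1)
    (h0' : brLo m j' 0 ≤ x0 ∧ x0 ≤ brHi m n j' 0)
    (h1' : brLo m j' 1 ≤ x1 ∧ x1 ≤ brHi m n j' 1) : j = j' := by
  unfold brLo brHi at h0 h1 h0' h1'
  split_ifs at h0 h1 h0' h1' <;> first | exact ‹False›.elim | omega

lemma brExists (m n x0 x1 : ℕ) (hm : 1 ≤ m) (hn : 2*m ≤ n)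
    (h0 : x0 < n) (h1 : x1 < n) :
    ∃ j, j < 4*m ∧ (brLo m j 0 ≤ x0 ∧ x0 ≤ brHi m n j 0) ∧
      (brLo m j 1 ≤ x1 ∧ x1 ≤ brHi m n j 1) := by
  refine ⟨if x0 < m then (if x1 < m then x1 else m + x0)
      else (if x1 < m then 2*m + min (x0 - m) (m-1) else 3*m + min (x1 - m) (m-1)), ?_⟩
  unfold brLo brHi
  split_ifs <;> first | exact ‹False›.elim | omega

/-- the bricks pierced by the line with second coordinate `y`. -/
lemma brPierce1 (m n y s : ℕ) (hm : 1 ≤ m) (hn : 2*m ≤ n) (hy : y < n) (hs : s ≤ m) :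
    (if y < m then (if s < m then 2*m + s else y)
      else (if s < m then m + s else 3*m + min (y - m) (m-1))) < 4*m ∧
    brLo m (if y < m then (if s < m then 2*m + s else y)
      else (if s < m then m + s else 3*m + min (y - m) (m-1))) 1 ≤ y ∧
    y ≤ brHi m n (if y < m then (if s < m then 2*m + s else y)
      else (if s < m then m + s else 3*m + min (y - m) (m-1))) 1 := by
  unfold brLo brHi
  split_ifs <;> first | exact ‹False›.elim | omega

/-- the bricks pierced by the line with first coordinate `x`. -/
lemma brPierce0 (m n x s : ℕ) (hm : 1 ≤ m) (hn : 2*m ≤ n) (hx : x < n) (hs : s ≤ m) :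
    (if x < m then (if s < m then s else m + x)
      else (if s < m then 3*m + s else 2*m + min (x - m) (m-1))) < 4*m ∧
    brLo m (if x < m then (if s < m then s else m + x)
      else (if s < m then 3*m + s else 2*m + min (x - m) (m-1))) 0 ≤ x ∧
    x ≤ brHi m n (if x < m then (if s < m then s else m + x)
      else (if s < m then 3*m + s else 2*m + min (x - m) (m-1))) 0 := by
  unfold brLo brHi
  split_ifs <;> first | exact ‹False›.elim | omega

/-- For `k ≥ 2` and `n ≥ 2(k-1)` there is a partition of `[n]^2` into exactly
`4(k-1)` proper bricks with the `k`-piercing property. Points of `[n]^2` are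
modelled as functions `Fin 2 → Fin n`; a brick is a box whose side sets are
intervals `Finset.Icc a b` in `Fin n`, each nonempty and proper (`≠ univ`);
"partition" means every point lies in exactly one brick; the axis-parallel
line in direction `i` through the point `a` consists of the points agreeing
with `a` in all coordinates other than `i`. -/
theorem stmt_15 (k n : ℕ) (hk : 2 ≤ k) (hn : 2 * (k - 1) ≤ n) :
    ∃ B : Fin (4 * (k - 1)) → Fin 2 → Finset (Fin n),
      (∀ j i, (B j i).Nonempty) ∧
      (∀ j i, B j i ≠ Finset.univ) ∧
      (∀ j i, ∃ a b : Fin n, B j i = Finset.Icc a b) ∧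
      (∀ x : Fin 2 → Fin n, ∃! j, ∀ i, x i ∈ B j i) ∧
      (∀ i : Fin 2, ∀ a : Fin 2 → Fin n,
        k ≤ (Finset.univ.filter (fun j : Fin (4 * (k - 1)) =>
          ∃ x : Fin 2 → Fin n,
            (∀ i' : Fin 2, i' ≠ i → x i' = a i') ∧ ∀ i', x i' ∈ B j i')).card) := by
  set m := k - 1 with hmdef
  have hm : 1 ≤ m := by omega
  have hn2 : 2*m ≤ n := by omega
  have hn1 : 1 ≤ n := by omega
  let e : ℕ → Fin n := fun v => ⟨min v (n-1), by omega⟩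
  have hval : ∀ v, v ≤ n - 1 → (e v).val = v := by
    intro v hv; simp only [e]; omega
  let B : Fin (4*m) → Fin 2 → Finset (Fin n) := fun j i =>
    Finset.Icc (e (brLo m j.val i.val)) (e (brHi m n j.val i.val))
  have memB : ∀ (j : Fin (4*m)) (i : Fin 2) (x : Fin n),
      x ∈ B j i ↔ (brLo m j.val i.val ≤ x.val ∧ x.val ≤ brHi m n j.val i.val) := by
    intro j i x
    have hb := brBounds m n j.val i.val hm hn2 j.isLt
    simp only [B, e, Finset.mem_Icc, Fin.le_def]
    omega
  have hline : ∀ (j : Fin (4*m)) (i : Fin 2) (a : Fin 2 → Fin n),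
      (∀ i', i' ≠ i → brLo m j.val i'.val ≤ (a i').val ∧ (a i').val ≤ brHi m n j.val i'.val) →
      ∃ x : Fin 2 → Fin n, (∀ i', i' ≠ i → x i' = a i') ∧ ∀ i', x i' ∈ B j i' := by
    intro j i a ha
    refine ⟨Function.update a i (e (brLo m j.val i.val)), ?_, ?_⟩
    · intro i' h; rw [Function.update_of_ne h]
    · intro i'
      by_cases h : i' = i
      · subst h; rw [Function.update_self, memB]
        have hb := brBounds m n j.val i'.val hm hn2 j.isLt
        rw [hval _ (le_trans hb.1 hb.2)]
        exact ⟨le_refl _, hb.1⟩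
      · rw [Function.update_of_ne h, memB]; exact ha i' h
  refine ⟨B, ?_, ?_, ?_, ?_, ?_⟩
  · intro j i
    refine ⟨e (brLo m j.val i.val), (memB j i _).mpr ?_⟩
    have hb := brBounds m n j.val i.val hm hn2 j.isLt
    rw [hval _ (le_trans hb.1 hb.2)]; exact ⟨le_refl _, hb.1⟩
  · intro j i h
    have h0 : (⟨0, by omega⟩ : Fin n) ∈ B j i := h ▸ Finset.mem_univ _
    have h1 : (⟨n-1, by omega⟩ : Fin n) ∈ B j i := h ▸ Finset.mem_univ _
    rw [memB] at h0 h1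
    have := brProper m n j.val i.val hm hn2 j.isLt
    simp only at h0 h1; omega
  · intro j i; exact ⟨_, _, rfl⟩
  · intro x
    obtain ⟨jv, hjv, h0, h1⟩ := brExists m n (x 0).val (x 1).val hm hn2 (x 0).isLt (x 1).isLt
    refine ⟨⟨jv, hjv⟩, ?_, ?_⟩
    · intro i
      fin_cases i
      · exact (memB _ _ _).mpr h0
      · exact (memB _ _ _).mpr h1
    · intro j' hj'
      have h0' := (memB j' 0 (x 0)).mp (hj' 0)
      have h1' := (memB j' 1 (x 1)).mp (hj' 1)
      exact Fin.ext (brUnique m n j'.val jv (x 0).val (x 1).val hm hn2 j'.isLt hjv h0' h1' h0 h1)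
  · intro i a
    fin_cases i
    · -- direction 0 : fixed second coordinate a 1
      set y := (a 1).val with hy
      let g : Fin (m+1) → Fin (4*m) := fun s =>
        ⟨if y < m then (if s.val < m then 2*m + s.val else y)
          else (if s.val < m then m + s.val else 3*m + min (y - m) (m-1)),
         (brPierce1 m n y s.val hm hn2 (a 1).isLt (by omega)).1⟩
      refine le_trans ?_ (Finset.card_le_card_of_injOn (s := (Finset.univ : Finset (Fin (m+1)))) g ?_ ?_)
      · simp only [Finset.card_univ, Fintype.card_fin]; omega
      · intro s _
        refine Finset.mem_filter.mpr ⟨Finset.mem_univ _, hline (g s) _ a ?_⟩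
        have hp := brPierce1 m n y s.val hm hn2 (a 1).isLt (by omega)
        intro i' hi'
        fin_cases i'
        · exact absurd rfl hi'
        · exact hp.2
      · intro s _ s' _ hss
        have : (g s).val = (g s').val := congrArg Fin.val hss
        simp only [g] at this
        apply Fin.ext
        have hs := s.isLt; have hs' := s'.isLt
        split_ifs at this <;> omega
    · -- direction 1 : fixed first coordinate a 0
      set x0 := (a 0).val with hx0
      let g : Fin (m+1) → Fin (4*m) := fun s =>
        ⟨if x0 < m then (if s.val < m then s.val else m + x0)
          else (if s.val < m then 3*m + s.val else 2*m + min (x0 - m) (m-1)),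
         (brPierce0 m n x0 s.val hm hn2 (a 0).isLt (by omega)).1⟩
      refine le_trans ?_ (Finset.card_le_card_of_injOn (s := (Finset.univ : Finset (Fin (m+1)))) g ?_ ?_)
      · simp only [Finset.card_univ, Fintype.card_fin]; omega
      · intro s _
        refine Finset.mem_filter.mpr ⟨Finset.mem_univ _, hline (g s) _ a ?_⟩
        have hp := brPierce0 m n x0 s.val hm hn2 (a 0).isLt (by omega)
        intro i' hi'
        fin_cases i'
        · exact hp.2
        · exact absurd rfl hi'
      · intro s _ s' _ hss
        have : (g s).val = (g s').val := congrArg Fin.val hss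
        simp only [g] at this
        apply Fin.ext
        have hs := s.isLt; have hs' := s'.isLt
        split_ifs at this <;> omega
end

section
/- Let n > t ≥ 1 and d ≥ 1 be integers, and let G_1, …, G_d be graphs on a common vertex set V with |V| = n such that every pair of distinct vertices of V is adjacent in at least one G_c. Suppose that for every c ∈ {1, …, d} and every vertex v ∈ V there is a set S ⊆ V with v ∈ S and |S| = t that is an independent set in G_c (no edge of G_c joins two vertices of S). Then d·(n − t)^2 ≥ n(n − 1)/2. -/
/-- Let `n > t ≥ 1`, `d ≥ 1`, and let `G 1, …, G d` be graphs on a common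
vertex set `V` with `|V| = n` such that every pair of distinct vertices is
adjacent in at least one `G c`. If for every color `c` and every vertex `v`
there is a set `S` of `t` vertices containing `v` that is independent in
`G c`, then `d·(n - t)² ≥ n(n - 1)/2`. -/
theorem stmt_19 (n t d : ℕ) (ht : 1 ≤ t) (htn : t < n) (hd : 1 ≤ d)
    (V : Type*) [Fintype V] (hV : Fintype.card V = n)
    (G : Fin d → SimpleGraph V)
    (hcover : ∀ u v : V, u ≠ v → ∃ c : Fin d, (G c).Adj u v)
    (hind : ∀ c : Fin d, ∀ v : V, ∃ S : Finset V, v ∈ S ∧ S.card = t ∧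
      ∀ a ∈ S, ∀ b ∈ S, ¬ (G c).Adj a b) :
    (n : ℝ) * ((n : ℝ) - 1) / 2 ≤ (d : ℝ) * ((n : ℝ) - (t : ℝ)) ^ 2 := by
  classical
  have hn0 : 0 < n := lt_of_le_of_lt (Nat.zero_le t) htn
  have hne : Nonempty V := by
    rw [← Fintype.card_pos_iff, hV]; omega
  set P : Fin d → Finset (V × V) :=
    fun c => Finset.univ.offDiag.filter (fun p => (G c).Adj p.1 p.2) with hP
  -- covering: all off-diagonal pairs are adjacent in some color
  have hcov : (Finset.univ.offDiag (α := V)).card ≤ ∑ c, (P c).card := by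
    calc (Finset.univ.offDiag (α := V)).card
        ≤ (Finset.univ.biUnion P).card := by
          apply Finset.card_le_card
          intro p hp
          obtain ⟨c, hc⟩ := hcover p.1 p.2 (Finset.mem_offDiag.mp hp).2.2
          exact Finset.mem_biUnion.mpr ⟨c, Finset.mem_univ c,
            Finset.mem_filter.mpr ⟨hp, hc⟩⟩
      _ ≤ ∑ c, (P c).card := Finset.card_biUnion_le
  have hoff : (Finset.univ.offDiag (α := V)).card = n * (n - 1) := by
    rw [Finset.offDiag_card, Finset.card_univ, hV, Nat.mul_sub, Nat.mul_one]
  -- degree bound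
  have hdeg : ∀ (c : Fin d) (u : V),
      (Finset.univ.filter (fun v => (G c).Adj u v)).card ≤ n - t := by
    intro c u
    obtain ⟨S, huS, hScard, hSind⟩ := hind c u
    have hsub : Finset.univ.filter (fun v => (G c).Adj u v) ⊆ Sᶜ := by
      intro v hv
      simp only [Finset.mem_filter] at hv
      simp only [Finset.mem_compl]
      intro hvS
      exact hSind u huS v hvS hv.2
    calc _ ≤ (Sᶜ).card := Finset.card_le_card hsub
      _ = n - t := by rw [Finset.card_compl, hScard, hV]
  -- per-color bound
  have hbound : ∀ c : Fin d, (P c).card ≤ 2 * (n - t) ^ 2 := by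
    intro c
    obtain ⟨v0⟩ := hne
    obtain ⟨S, hv0S, hScard, hSind⟩ := hind c v0
    set A := (P c).filter (fun p => p.1 ∉ S) with hA
    set B := (P c).filter (fun p => ¬ p.1 ∉ S) with hB
    have hAcard : A.card ≤ (n - t) ^ 2 := by
      have hsub : A ⊆ Sᶜ.biUnion
          (fun u => (Finset.univ.filter (fun v => (G c).Adj u v)).image
            (fun v => (u, v))) := by
        intro p hp
        simp only [hA, Finset.mem_filter, hP] at hp
        apply Finset.mem_biUnion.mpr
        refine ⟨p.1, Finset.mem_compl.mpr hp.2, ?_⟩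
        apply Finset.mem_image.mpr
        exact ⟨p.2, Finset.mem_filter.mpr ⟨Finset.mem_univ _, hp.1.2⟩, rfl⟩
      calc A.card ≤ _ := Finset.card_le_card hsub
        _ ≤ ∑ u ∈ Sᶜ, ((Finset.univ.filter (fun v => (G c).Adj u v)).image
              (fun v => (u, v))).card := Finset.card_biUnion_le
        _ ≤ ∑ _u ∈ Sᶜ, (n - t) := by
            apply Finset.sum_le_sum
            intro u _
            exact le_trans (Finset.card_image_le) (hdeg c u)
        _ = (n - t) ^ 2 := by
            rw [Finset.sum_const, Finset.card_compl, hScard, hV, smul_eq_mul, sq]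
    have hBcard : B.card ≤ A.card := by
      apply Finset.card_le_card_of_injOn Prod.swap
      · intro p hp
        simp only [Finset.mem_coe, hB, Finset.mem_filter, hP, Finset.mem_offDiag, not_not] at hp
        obtain ⟨⟨⟨_, _, hne'⟩, hadj⟩, hpS⟩ := hp
        have hp2 : p.2 ∉ S := fun h => hSind p.1 hpS p.2 h hadj
        simp only [Finset.mem_coe, hA, Finset.mem_filter, hP, Finset.mem_offDiag]
        exact ⟨⟨⟨Finset.mem_univ _, Finset.mem_univ _, hne'.symm⟩, hadj.symm⟩, hp2⟩
      · intro p _ q _ h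
        exact Prod.swap_injective h
    have hsplit : A.card + B.card = (P c).card :=
      Finset.card_filter_add_card_filter_not (s := P c) (fun q : V × V => q.1 ∉ S)
    have := hAcard
    omega
  have key : n * (n - 1) ≤ d * (2 * (n - t) ^ 2) := by
    calc n * (n - 1) = (Finset.univ.offDiag (α := V)).card := hoff.symm
      _ ≤ ∑ c, (P c).card := hcov
      _ ≤ ∑ _c : Fin d, 2 * (n - t) ^ 2 := Finset.sum_le_sum fun c _ => hbound c
      _ = d * (2 * (n - t) ^ 2) := by
          rw [Finset.sum_const, Finset.card_univ, Fintype.card_fin, smul_eq_mul]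
  have hreal : ((n * (n - 1) : ℕ) : ℝ) ≤ ((d * (2 * (n - t) ^ 2) : ℕ) : ℝ) :=
    Nat.cast_le.mpr key
  have h1 : ((n - 1 : ℕ) : ℝ) = (n : ℝ) - 1 := by
    rw [Nat.cast_sub hn0]; norm_num
  have h2 : ((n - t : ℕ) : ℝ) = (n : ℝ) - (t : ℝ) := by
    rw [Nat.cast_sub (le_of_lt htn)]
  push_cast [h1, h2] at hreal
  linarith
end
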